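/- arXiv:2507.09752 — 3 statements merged into one kernel-verified Lean document; each statement's English description precedes it below -/
import Mathlib

section
/- For all n ≥ 0, the number of partitions of 7n+5 is divisible by 7. -/
/-!
Ramanujan's congruence p(7n+5) ≡ 0 (mod 7).

Proof outline: work in the power series ring over `K = ZMod 7`.
* `fp m = ∏_{i=1}^m (1 - X^i)` (finite q-Pochhammer), `Pg m = ∏ (1-X^i)⁻¹` whose
  coefficients count partitions (via the generating-function machinery adapted from
  the Mathlib archive's proof of Euler's partition theorem).
* Gaussian binomials `B m k` are defined by the q-Pascal recursion; we prove the
  second Pascal recurrence, the product formula and symmetry.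
* A finite form of Jacobi's triple product is proved by induction on `n` for
  polynomials over the power series ring, and, after cancelling `(Z - 1)` and
  evaluating at `Z = 1`, yields the finite Jacobi identity
  `fp n ^ 2 = ∑_k (-1)^k (2k+1) X^{T k} B (2n+1) (n-k)`.
* Hence the coefficients of `fp m ^ 3` are supported on triangular numbers with
  coefficients `±(2k+1)`, so every coefficient of `fp m ^ 6` of index ≡ 5 mod 7
  vanishes, because `(2j+1)² + (2k+1)² ≡ 0 (mod 7)` forces `7 ∣ (2j+1)(2k+1)`.
* By Frobenius, `fp m ^ 7 = ∏ (1 - X^{7i})`, so `Pg m = fp m ^ 6 * ∏ (1-X^{7i})⁻¹`,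
  and the second factor only has coefficients in degrees divisible by 7.
-/

open PowerSeries Finset
open scoped Classical

noncomputable section
namespace R7


abbrev K := ZMod 7
instance : Fact (Nat.Prime 7) := ⟨by norm_num⟩

/-- indicator series (from Archive) -/
def indicatorSeries (α : Type*) [Semiring α] (s : Set ℕ) : PowerSeries α :=
  PowerSeries.mk fun n => if n ∈ s then 1 else 0

theorem coeff_indicator {α : Type*} (s : Set ℕ) [Semiring α] (n : ℕ) :
    coeff (R := α) n (indicatorSeries _ s) = if n ∈ s then 1 else 0 :=
  coeff_mk _ _

theorem constantCoeff_indicator {α : Type*} (s : Set ℕ) [Semiring α] :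
    constantCoeff (R := α) (indicatorSeries _ s) = if 0 ∈ s then 1 else 0 :=
  rfl

theorem num_series' {α : Type*} [Field α] (i : ℕ) :
    (1 - (X : PowerSeries α) ^ (i + 1))⁻¹ = indicatorSeries α {k | i + 1 ∣ k} := by
  rw [PowerSeries.inv_eq_iff_mul_eq_one]
  · ext n
    cases n with
    | zero => simp [mul_sub, zero_pow, constantCoeff_indicator]
    | succ n =>
      simp only [coeff_one, if_false, mul_sub, mul_one, coeff_indicator,
        LinearMap.map_sub, reduceCtorEq]
      simp_rw [coeff_mul, coeff_X_pow, coeff_indicator, @boole_mul _ _ _ _]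
      simp only [Set.mem_setOf_eq]
      erw [sum_ite, sum_ite]
      simp_rw [@filter_filter _ _ _ _ _, sum_const_zero, add_zero, sum_const, nsmul_eq_mul, mul_one,
        sub_eq_iff_eq_add, zero_add]
      symm
      split_ifs with h
      · suffices #{a ∈ antidiagonal (n + 1) | i + 1 ∣ a.fst ∧ a.snd = i + 1} = 1 by
          convert congr_arg ((↑) : ℕ → α) this; norm_cast
        rw [card_eq_one]
        cases' h with p hp
        refine ⟨((i + 1) * (p - 1), i + 1), ?_⟩
        ext ⟨a₁, a₂⟩
        simp only [mem_filter, Prod.mk.injEq, HasAntidiagonal.mem_antidiagonal, mem_singleton]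
        constructor
        · rintro ⟨a_left, ⟨a, rfl⟩, rfl⟩
          refine ⟨?_, rfl⟩
          rw [Nat.mul_sub_left_distrib, ← hp, ← a_left, mul_one, Nat.add_sub_cancel]
        · rintro ⟨rfl, rfl⟩
          match p with
          | 0 => rw [mul_zero] at hp; cases hp
          | p + 1 => rw [hp]; simp [mul_add]
      · suffices #{a ∈ antidiagonal (n + 1) | i + 1 ∣ a.fst ∧ a.snd = i + 1} = 0 by
          convert congr_arg ((↑) : ℕ → α) this; norm_cast
        rw [card_eq_zero]
        apply eq_empty_of_forall_notMem
        simp only [Prod.forall, mem_filter, not_and, HasAntidiagonal.mem_antidiagonal]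
        rintro _ h₁ h₂ ⟨a, rfl⟩ rfl
        apply h
        simp [← h₂]
  · simp [zero_pow]

-- The main workhorse (from Archive, verbatim except namespace).
theorem partialGF_prop (α : Type*) [CommSemiring α] (n : ℕ) (s : Finset ℕ) (hs : ∀ i ∈ s, 0 < i)
    (c : ℕ → Set ℕ) (hc : ∀ i, i ∉ s → 0 ∈ c i) :
    #{p : n.Partition | (∀ j, p.parts.count j ∈ c j) ∧ ∀ j ∈ p.parts, j ∈ s} =
      coeff (R := α) n (∏ i ∈ s, indicatorSeries α ((· * i) '' c i)) := by
  simp_rw [coeff_prod, coeff_indicator, prod_boole, sum_boole]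
  apply congr_arg
  simp only [mem_univ, forall_true_left, not_and, not_forall, exists_prop,
    Set.mem_image, not_exists]
  set φ : (a : Nat.Partition n) →
    a ∈ filter (fun p ↦ (∀ (j : ℕ), Multiset.count j p.parts ∈ c j) ∧ ∀ j ∈ p.parts, j ∈ s) univ →
    ℕ →₀ ℕ := fun p _ => {
      toFun := fun i => Multiset.count i p.parts • i
      support := Finset.filter (fun i => i ≠ 0) p.parts.toFinset
      mem_support_toFun := fun a => by
        simp only [smul_eq_mul, ne_eq, mul_eq_zero, Multiset.count_eq_zero]
        rw [not_or, not_not]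
        simp only [Multiset.mem_toFinset, not_not, mem_filter] }
  refine Finset.card_bij φ ?_ ?_ ?_
  · intro a ha
    simp only [φ, not_forall, not_exists, not_and, exists_prop, mem_filter]
    rw [mem_finsuppAntidiag]
    dsimp only [ne_eq, smul_eq_mul, id_eq, eq_mpr_eq_cast, le_eq_subset, Finsupp.coe_mk]
    simp only [mem_univ, forall_true_left, not_and, not_forall, exists_prop,
      mem_filter, true_and] at ha
    refine ⟨⟨?_, fun i ↦ ?_⟩, fun i _ ↦ ⟨a.parts.count i, ha.1 i, rfl⟩⟩
    · conv_rhs => simp [← a.parts_sum]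
      rw [sum_multiset_count_of_subset _ s]
      · simp only [smul_eq_mul]
      · intro i
        simp only [Multiset.mem_toFinset, not_not, mem_filter]
        apply ha.2
    · simp only [ne_eq, Multiset.mem_toFinset, not_not, mem_filter, and_imp]
      exact fun hi _ ↦ ha.2 i hi
  · intro p₁ hp₁ p₂ hp₂ h
    apply Nat.Partition.ext
    simp only [true_and, mem_univ, mem_filter] at hp₁ hp₂
    ext i
    simp only [φ, ne_eq, Multiset.mem_toFinset, not_not, smul_eq_mul, Finsupp.mk.injEq] at h
    by_cases hi : i = 0
    · rw [hi]
      rw [Multiset.count_eq_zero_of_notMem]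
      · rw [Multiset.count_eq_zero_of_notMem]
        intro a; exact Nat.lt_irrefl 0 (hs 0 (hp₂.2 0 a))
      intro a; exact Nat.lt_irrefl 0 (hs 0 (hp₁.2 0 a))
    · rw [← mul_left_inj' hi]
      rw [funext_iff] at h
      exact h.2 i
  · simp only [φ, mem_filter, mem_finsuppAntidiag, mem_univ, exists_prop, true_and, and_assoc]
    rintro f ⟨hf, hf₃, hf₄⟩
    have hf' : f ∈ finsuppAntidiag s n := mem_finsuppAntidiag.mpr ⟨hf, hf₃⟩
    simp only [mem_finsuppAntidiag] at hf'
    refine ⟨⟨∑ i ∈ s, Multiset.replicate (f i / i) i, ?_, ?_⟩, ?_, ?_, ?_⟩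
    · intro i hi
      simp only [exists_prop, Multiset.mem_sum, mem_map, Function.Embedding.coeFn_mk] at hi
      rcases hi with ⟨t, ht, z⟩
      apply hs
      rwa [Multiset.eq_of_mem_replicate z]
    · simp_rw [Multiset.sum_sum, Multiset.sum_replicate, Nat.nsmul_eq_mul]
      rw [← hf'.1]
      refine sum_congr rfl fun i hi => Nat.div_mul_cancel ?_
      rcases hf₄ i hi with ⟨w, _, hw₂⟩
      rw [← hw₂]
      exact dvd_mul_left _ _
    · intro i
      simp_rw [Multiset.count_sum', Multiset.count_replicate, sum_ite_eq']
      split_ifs with h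
      · rcases hf₄ i h with ⟨w, hw₁, hw₂⟩
        rwa [← hw₂, Nat.mul_div_cancel _ (hs i h)]
      · exact hc _ h
    · intro i hi
      rw [Multiset.mem_sum] at hi
      rcases hi with ⟨j, hj₁, hj₂⟩
      rwa [Multiset.eq_of_mem_replicate hj₂]
    · ext i
      simp_rw [Multiset.count_sum', Multiset.count_replicate, sum_ite_eq']
      simp only [ne_eq, Multiset.mem_toFinset, not_not, smul_eq_mul, ite_mul,
        zero_mul, Finsupp.coe_mk]
      split_ifs with h
      · apply Nat.div_mul_cancel
        rcases hf₄ i h with ⟨w, _, hw₂⟩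
        apply Dvd.intro_left _ hw₂
      · apply symm
        rw [← Finsupp.notMem_support_iff]
        exact notMem_mono hf'.2 h

/-- partial generating function for all partitions -/
def Pg (m : ℕ) : PowerSeries K := ∏ i ∈ range m, (1 - X ^ (i + 1))⁻¹

theorem coeff_Pg {N m : ℕ} (h : N ≤ m) :
    coeff (R := K) N (Pg m) = (Fintype.card (Nat.Partition N) : K) := by
  have := partialGF_prop K N ((range m).map ⟨Nat.succ, Nat.succ_injective⟩)
    (by simp only [mem_map, Function.Embedding.coeFn_mk]; rintro i ⟨_, _, rfl⟩; exact Nat.succ_pos _)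
    (fun _ => Set.univ) (fun _ _ => trivial)
  rw [Pg]
  have h2 : (∏ i ∈ (range m).map ⟨Nat.succ, Nat.succ_injective⟩,
      indicatorSeries K ((· * i) '' Set.univ)) = ∏ i ∈ range m, (1 - (X : PowerSeries K) ^ (i+1))⁻¹ := by
    rw [Finset.prod_map]
    refine Finset.prod_congr rfl fun i _ => ?_
    have hset : ((· * Nat.succ i) '' (Set.univ : Set ℕ)) = {k | i + 1 ∣ k} := by
      ext k
      constructor
      · rintro ⟨p, -, rfl⟩; exact Dvd.intro_left p rfl
      · rintro ⟨p, rfl⟩; exact ⟨p, Set.mem_univ p, mul_comm _ _⟩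
    simp only [Function.Embedding.coeFn_mk]
    rw [hset, num_series']
  rw [h2] at this
  rw [← this]
  have h4 : filter (fun p : Nat.Partition N =>
      (∀ j, p.parts.count j ∈ (fun _ => (Set.univ : Set ℕ)) j) ∧
        ∀ j ∈ p.parts, j ∈ (range m).map ⟨Nat.succ, Nat.succ_injective⟩) univ = univ := by
    rw [Finset.filter_eq_self]
    intro p _
    refine ⟨fun _ => trivial, fun j hj => ?_⟩
    have hj1 : 0 < j := p.parts_pos hj
    have hjN : j ≤ N := by
      simpa [p.parts_sum] using Multiset.single_le_sum (fun _ _ => Nat.zero_le _) _ hj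
    simp only [mem_map, mem_range, Function.Embedding.coeFn_mk]
    exact ⟨j - 1, by omega, by omega⟩
  rw [h4, Finset.card_univ]

/-- finite q-Pochhammer ∏_{i=1}^m (1 - X^i) -/
def fp (m : ℕ) : PowerSeries K := ∏ i ∈ range m, (1 - X ^ (i + 1))

lemma fp_zero : fp 0 = 1 := Finset.prod_range_zero _

lemma fp_succ (m : ℕ) : fp (m + 1) = fp m * (1 - X ^ (m + 1)) := Finset.prod_range_succ _ _

lemma constantCoeff_fp (m : ℕ) : constantCoeff (R := K) (fp m) = 1 := by
  rw [fp, map_prod]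
  have : ∀ i ∈ range m, constantCoeff (R := K) (1 - X ^ (i + 1)) = 1 := by
    intro i _; simp
  rw [Finset.prod_congr rfl this]
  simp

lemma fp_ne_zero (m : ℕ) : fp m ≠ 0 := by
  intro h
  have := constantCoeff_fp m
  rw [h] at this
  simp at this

/-- Gaussian binomial coefficient as a power series over K, with integer lower index
(zero out of range). -/
def B : ℕ → ℤ → PowerSeries K
  | 0, k => if k = 0 then 1 else 0
  | m + 1, k => B m (k - 1) + X ^ k.toNat * B m k

lemma B_rec1 (m : ℕ) (k : ℤ) : B (m + 1) k = B m (k - 1) + X ^ k.toNat * B m k := rfl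

lemma B_out (m : ℕ) (k : ℤ) (h : k < 0 ∨ (m : ℤ) < k) : B m k = 0 := by
  induction m generalizing k with
  | zero => rw [B]; rw [if_neg]; omega
  | succ m ih =>
    rw [B_rec1, ih (k - 1) (by omega), ih k (by omega)]
    ring

lemma B_zero (m : ℕ) : B m 0 = 1 := by
  induction m with
  | zero => rw [B]; simp
  | succ m ih =>
    rw [B_rec1, show (0:ℤ) - 1 = -1 by ring, B_out m (-1) (by omega)]
    simpa using ih

lemma B_self (m : ℕ) : B m m = 1 := by
  induction m with
  | zero => rw [B]; simp
  | succ m ih =>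
    rw [B_rec1, B_out m (m + 1 : ℕ) (by omega)]
    push_cast
    simpa using ih

lemma B_rec2 (m : ℕ) (k : ℤ) :
    B (m + 1) k = X ^ ((m : ℤ) + 1 - k).toNat * B m (k - 1) + B m k := by
  induction m generalizing k with
  | zero =>
    rcases lt_trichotomy k 0 with h | h | h
    · rw [B_rec1, B_out 0 (k-1) (by omega), B_out 0 k (by omega)]; ring
    · subst h
      rw [B_rec1, show (0:ℤ) - 1 = -1 by ring, B_out 0 (-1) (by omega)]
      simp
    · rcases eq_or_lt_of_le (by omega : (1:ℤ) ≤ k) with h1 | h1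
      · rw [← h1, B_rec1, show (1:ℤ) - 1 = 0 by ring, B_zero, B_out 0 1 (by omega)]
        simp
      · rw [B_rec1, B_out 0 (k-1) (by omega), B_out 0 k (by omega)]; ring
  | succ m ih =>
    rcases lt_trichotomy k 0 with h | h | h
    · rw [B_out (m+1+1) k (Or.inl h), B_out (m+1) (k-1) (by omega), B_out (m+1) k (Or.inl h)]
      ring
    · subst h
      rw [B_zero, show (0:ℤ) - 1 = -1 by ring, B_out (m+1) (-1) (by omega), B_zero]
      ring
    · rcases le_or_gt k (m + 1 : ℤ) with h2 | h2
      · -- main case: 1 ≤ k ≤ m+1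
        have R1 : X ^ (((m+1 : ℕ) : ℤ) + 1 - k).toNat * B (m+1) (k-1)
            = X ^ (((m+1 : ℕ) : ℤ) + 1 - k).toNat * B m (k-2) + X ^ (m+1) * B m (k-1) := by
          rw [B_rec1, show k - 1 - 1 = k - 2 by ring, mul_add, ← mul_assoc, ← pow_add]
          have : (((m+1 : ℕ) : ℤ) + 1 - k).toNat + ((k:ℤ)-1).toNat = m + 1 := by omega
          rw [this]
        have L1 : B (m+1) (k-1) = X ^ ((m:ℤ)+1-(k-1)).toNat * B m (k-2) + B m (k-1) := by
          rw [ih (k-1), show k - 1 - 1 = k - 2 by ring]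
        rw [B_rec1 (m+1) k, R1, L1]
        have e1 : (X : PowerSeries K) ^ k.toNat * X ^ ((m:ℤ)+1-k).toNat = X ^ (m+1) := by
          rw [← pow_add]; congr 1; omega
        have e2 : ((m:ℤ)+1-(k-1)).toNat = (((m+1 : ℕ) : ℤ) + 1 - k).toNat := by omega
        have hI : B (m+1) k = X ^ ((m:ℤ)+1-k).toNat * B m (k-1) + B m k := ih k
        have hR : B (m+1) k = B m (k - 1) + X ^ k.toNat * B m k := B_rec1 m k
        rw [e2]
        linear_combination (X : PowerSeries K) ^ k.toNat * hI - hR + (B m (k-1)) * e1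
      · rcases eq_or_lt_of_le (by omega : (m:ℤ) + 2 ≤ k) with h3 | h3
        · rw [← h3]
          rw [show ((m:ℤ) + 2) = ((m + 2 : ℕ) : ℤ) by push_cast; ring]
          have e0 : ((((m+1:ℕ)):ℤ) + 1 - (((m+2:ℕ)):ℤ)).toNat = 0 := by push_cast; omega
          rw [e0, pow_zero, one_mul,
            show (((m+2:ℕ)):ℤ) - 1 = ((m + 1 : ℕ) : ℤ) by push_cast; ring,
            B_self, B_self, B_out (m+1) ((m+2:ℕ) : ℤ) (by push_cast; omega)]
          ring
        · rw [B_out (m+1+1) k (Or.inr (by push_cast; omega)), B_out (m+1) (k-1) (by omega),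
            B_out (m+1) k (Or.inr (by push_cast; omega))]
          ring

/-- product formula: fp m = B m k * fp k * fp (m - k) for k ≤ m -/
lemma B_prod (m k : ℕ) (h : k ≤ m) : fp m = B m k * fp k * fp (m - k) := by
  induction m generalizing k with
  | zero =>
    interval_cases k
    simp [B_zero, fp_zero]
  | succ m ih =>
    rcases Nat.eq_zero_or_pos k with rfl | hk
    · rw [show ((0:ℕ):ℤ) = 0 by norm_num, B_zero, fp_zero]
      simp
    · obtain ⟨k', rfl⟩ : ∃ k', k = k' + 1 := ⟨k - 1, by omega⟩
      rw [show ((k' + 1 : ℕ) : ℤ) = ((k' : ℕ) : ℤ) + 1 by push_cast; ring, B_rec1]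
      rcases eq_or_lt_of_le h with h1 | h1
      · -- k'+1 = m+1
        have hk'm : k' = m := by omega
        subst hk'm
        rw [B_out k' ((k':ℤ)+1) (by omega)]
        rw [show ((k':ℤ) + 1 - 1) = (k' : ℤ) by ring, B_self]
        simp [fp_zero]
      · have hk'le : k' ≤ m := by omega
        have hk1le : k' + 1 ≤ m := by omega
        rw [add_mul, add_mul]
        rw [show ((k':ℤ) + 1 - 1) = (k' : ℤ) by ring]
        have hA : B m k' * fp (k' + 1) * fp (m + 1 - (k' + 1))
            = fp m * (1 - X ^ (k' + 1)) := by
          rw [fp_succ k', show m + 1 - (k' + 1) = m - k' by omega]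
          calc B m k' * (fp k' * (1 - X ^ (k'+1))) * fp (m - k')
              = B m k' * fp k' * fp (m - k') * (1 - X ^ (k'+1)) := by ring
            _ = fp m * (1 - X ^ (k'+1)) := by rw [← ih k' hk'le]
        have hB : (X ^ ((k':ℤ)+1).toNat * B m ((k':ℤ)+1)) * fp (k' + 1) * fp (m + 1 - (k' + 1))
            = X ^ (k'+1) * (fp m * (1 - X ^ (m - k'))) := by
          have ht : ((k':ℤ)+1).toNat = k' + 1 := by omega
          rw [ht]
          rw [show m + 1 - (k' + 1) = (m - (k'+1)) + 1 by omega, fp_succ (m - (k'+1))]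
          rw [show m - (k' + 1) + 1 = m - k' by omega]
          rw [show ((k':ℤ) + 1) = ((k' + 1 : ℕ) : ℤ) by push_cast; ring]
          calc X ^ (k'+1) * B m (k'+1 : ℕ) * fp (k'+1) * (fp (m - (k'+1)) * (1 - X ^ (m - k')))
              = X ^ (k'+1) * (B m (k'+1 : ℕ) * fp (k'+1) * fp (m - (k'+1)) * (1 - X ^ (m - k'))) := by
                ring
            _ = X ^ (k'+1) * (fp m * (1 - X ^ (m - k'))) := by rw [← ih (k'+1) hk1le]
        rw [hA, hB, fp_succ m]
        have hX : X ^ (k' + 1) * (X ^ (m - k') : PowerSeries K) = X ^ (m + 1) := by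
          rw [← pow_add]; congr 1; omega
        rw [← hX]
        ring

lemma B_symm (m k : ℕ) (h : k ≤ m) : B m k = B m (m - k : ℕ) := by
  have h1 := B_prod m k h
  have h2 := B_prod m (m - k) (by omega)
  rw [show m - (m - k) = k by omega] at h2
  have h3 := h1.symm.trans h2
  have hne : fp k * fp (m - k) ≠ 0 := mul_ne_zero (fp_ne_zero _) (fp_ne_zero _)
  have h5 : B m k * (fp k * fp (m-k)) = B m (m - k : ℕ) * (fp k * fp (m-k)) := by
    linear_combination h3
  exact mul_right_cancel₀ hne h5
/-- triangle numbers -/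
def T : ℕ → ℕ
  | 0 => 0
  | k + 1 => T k + k + 1

lemma T_succ (k : ℕ) : T (k + 1) = T k + k + 1 := rfl

/-- the exponent in the JTP sum -/
def en (n j : ℕ) : ℕ := if n + 1 ≤ j then T (j - (n + 1)) else T (n - j)

lemma ex1 (n j : ℕ) (h : 1 ≤ j) : en n (j - 1) = en (n + 1) j := by
  unfold en
  rcases le_or_gt (n + 2) j with h2 | h2
  · rw [if_pos (by omega), if_pos (by omega)]
    congr 1; omega
  · rw [if_neg (by omega), if_neg (by omega)]
    congr 1; omega

lemma ex2 (n j : ℕ) (h : 2 ≤ j) (h' : j ≤ 2 * n + 3) :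
    en n (j - 2) + (n + 1) = en (n + 1) j + (2 * n + 3 - j) := by
  unfold en
  rcases le_or_gt (n + 3) j with h2 | h2
  · rw [if_pos (by omega), if_pos (by omega)]
    have e : j - (n + 2) = (j - (n + 3)) + 1 := by omega
    rw [e, T_succ, show j - 2 - (n + 1) = j - (n + 3) by omega]
    generalize T (j - (n + 3)) = t
    omega
  · rcases le_or_gt j (n + 1) with h3 | h3
    · rw [if_neg (by omega), if_neg (by omega)]
      have e : n - (j - 2) = (n + 1 - j) + 1 := by omega
      have e' : n + 1 - j = n + 1 - j := rfl
      rw [e, T_succ]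
      generalize T (n + 1 - j) = t
      omega
    · -- j = n + 2
      have hj : j = n + 2 := by omega
      subst hj
      rw [if_neg (by omega), if_pos (by omega)]
      have e1 : n - (n + 2 - 2) = 0 := by omega
      have e2 : n + 2 - (n + 2) = 0 := by omega
      rw [e1, e2]
      omega

lemma ex3 (n j : ℕ) : en n j + (n + 1) = en (n + 1) j + j := by
  unfold en
  rcases le_or_gt (n + 2) j with h2 | h2
  · rw [if_pos (by omega), if_pos (by omega)]
    have e : j - (n + 1) = (j - (n + 2)) + 1 := by omega
    rw [e, T_succ]
    generalize T (j - (n + 2)) = t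
    omega
  · rcases le_or_gt j n with h3 | h3
    · rw [if_neg (by omega), if_neg (by omega)]
      have e : n + 1 - j = (n - j) + 1 := by omega
      rw [e, T_succ]
      generalize T (n - j) = t
      omega
    · have hj : j = n + 1 := by omega
      subst hj
      rw [if_pos (by omega), if_neg (by omega)]

/-- the key B recursion step (double Pascal) -/
lemma B_step (n j : ℕ) :
    B (2*n+3) j = B (2*n+1) ((j:ℤ)-1) + X ^ (2*n+2) * B (2*n+1) ((j:ℤ)-1)
      + X ^ (2*n+3-j) * B (2*n+1) ((j:ℤ)-2) + X ^ j * B (2*n+1) j := by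
  rcases le_or_gt j (2*n+2) with hj | hj
  · have h1 : B (2*n+3) j = B (2*n+2) ((j:ℤ)-1) + X ^ j * B (2*n+2) j := by
      rw [show (2*n+3) = (2*n+2)+1 by ring, B_rec1]
      congr 2 <;> try omega
    have h2 : B (2*n+2) ((j:ℤ)-1)
        = X ^ ((2*n+3-j : ℕ)) * B (2*n+1) ((j:ℤ)-2) + B (2*n+1) ((j:ℤ)-1) := by
      rw [show (2*n+2) = (2*n+1)+1 by ring, B_rec2]
      rw [show ((j:ℤ)-1-1) = (j:ℤ)-2 by ring,
        show ((((2*n+1:ℕ)):ℤ) + 1 - ((j:ℤ)-1)).toNat = 2*n+3-j by omega]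
    have h3 : B (2*n+2) j = X ^ ((2*n+2-j : ℕ)) * B (2*n+1) ((j:ℤ)-1) + B (2*n+1) j := by
      rw [show (2*n+2) = (2*n+1)+1 by ring, B_rec2,
        show ((((2*n+1:ℕ)):ℤ) + 1 - (j:ℤ)).toNat = 2*n+2-j by omega]
    rw [h1, h2, h3]
    have hX : (X : PowerSeries K) ^ j * X ^ (2*n+2-j) = X ^ (2*n+2) := by
      rw [← pow_add]; congr 1; omega
    calc X ^ (2*n+3-j) * B (2*n+1) ((j:ℤ)-2) + B (2*n+1) ((j:ℤ)-1)
          + X ^ j * (X ^ (2*n+2-j) * B (2*n+1) ((j:ℤ)-1) + B (2*n+1) j)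
        = X ^ (2*n+3-j) * B (2*n+1) ((j:ℤ)-2) + B (2*n+1) ((j:ℤ)-1)
          + (X ^ j * X ^ (2*n+2-j)) * B (2*n+1) ((j:ℤ)-1) + X ^ j * B (2*n+1) j := by ring
      _ = _ := by rw [hX]; ring
  · rcases eq_or_lt_of_le (by omega : 2*n+3 ≤ j) with h3 | h3
    · rw [← h3]
      rw [show ((2*n+3 : ℕ):ℤ) - 2 = ((2*n+1 : ℕ) : ℤ) by push_cast; ring]
      rw [B_self, B_self, show (2*n+3-(2*n+3) : ℕ) = 0 by omega]
      rw [B_out (2*n+1) (((2*n+3:ℕ)):ℤ) (by push_cast; omega),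
          B_out (2*n+1) ((((2*n+3:ℕ)):ℤ) - 1) (by push_cast; omega)]
      ring
    · rw [B_out (2*n+3) j (by push_cast; omega), B_out (2*n+1) ((j:ℤ)-1) (by push_cast; omega),
        B_out (2*n+1) ((j:ℤ)-2) (by push_cast; omega), B_out (2*n+1) j (by push_cast; omega)]
      ring

abbrev P := Polynomial (PowerSeries K)

def coefA (n j : ℕ) : PowerSeries K := (-1)^(j+n+1) * X^(en n j) * B (2*n+1) j

def rhsA (n : ℕ) : P := ∑ j ∈ range (2*n+2), Polynomial.monomial j (coefA n j)

def lhsA (n : ℕ) : P :=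
  (∏ i ∈ range (n+1), (Polynomial.X - Polynomial.C (X^i))) *
  (∏ i ∈ range n, (1 - Polynomial.X * Polynomial.C (X^(i+1))))

lemma coefA_out (n j : ℕ) (h : 2*n+2 ≤ j) : coefA n j = 0 := by
  rw [coefA, B_out (2*n+1) j (by push_cast; omega)]
  ring

lemma coeff_rhsA (n j : ℕ) : (rhsA n).coeff j = coefA n j := by
  rw [rhsA, Polynomial.finset_sum_coeff]
  simp_rw [Polynomial.coeff_monomial]
  rw [Finset.sum_ite_eq' (range (2*n+2)) j (fun i => coefA n i)]
  split_ifs with h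
  · rfl
  · rw [coefA_out n j (by simp at h; omega)]

lemma sign_two (a : ℕ) : ((-1 : PowerSeries K))^(a+2) = (-1)^a := by
  rw [pow_add]
  norm_num

/-- coefficient-level step identity, for j ≥ 1 -/
lemma coef_step (n j : ℕ) (hj : 1 ≤ j) :
    coefA (n+1) j = coefA n (j-1) + coefA n (j-1) * X^(2*n+2)
      + ((-1)^(j+n) * X^(en n (j-2) + (n+1)) * B (2*n+1) ((j:ℤ)-2))
      - coefA n j * X^(n+1) := by
  have hcast : ((j - 1 : ℕ) : ℤ) = (j:ℤ) - 1 := by omega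
  have hmid : (X : PowerSeries K)^(en (n+1) j) * (X^(2*n+3-j) * B (2*n+1) ((j:ℤ)-2))
      = X^(en n (j-2) + (n+1)) * B (2*n+1) ((j:ℤ)-2) := by
    rcases le_or_gt j 1 with h1 | h1
    · rw [B_out (2*n+1) ((j:ℤ)-2) (by omega)]
      ring
    · rcases le_or_gt j (2*n+3) with h2 | h2
      · rw [← mul_assoc, ← pow_add]
        have e := ex2 n j (by omega) (by omega)
        rw [show en (n+1) j + (2*n+3-j) = en n (j-2) + (n+1) by omega]
      · rw [B_out (2*n+1) ((j:ℤ)-2) (by omega)]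
        ring
  have hlast : (X : PowerSeries K)^(en (n+1) j) * (X^j * B (2*n+1) j)
      = X^(en n j) * B (2*n+1) j * X^(n+1) := by
    rw [← mul_assoc, ← pow_add]
    have e := ex3 n j
    rw [show en (n+1) j + j = en n j + (n+1) by omega, pow_add]
    ring
  rw [coefA, coefA, coefA, hcast, show j - 1 + n + 1 = j + n by omega, ex1 n j hj,
    show 2*(n+1)+1 = 2*n+3 by ring, B_step n j]
  linear_combination ((-1 : PowerSeries K))^(j+n) * hmid + ((-1 : PowerSeries K))^(j+n) * hlast

lemma coefA_neg2 (n j : ℕ) (h2 : 2 ≤ j) :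
    ((-1 : PowerSeries K))^(j+n) * X^(en n (j-2) + (n+1)) * B (2*n+1) ((j:ℤ)-2)
      = - (coefA n (j-2) * X^(n+1)) := by
  have hs : ((-1 : PowerSeries K))^(j+n) = -((-1 : PowerSeries K))^(j-2+n+1) := by
    rw [show j+n = (j-2+n+1)+1 by omega, pow_succ]
    ring
  rw [coefA, show ((j-2:ℕ):ℤ) = (j:ℤ)-2 by omega, hs]
  ring

lemma coef_zero (n : ℕ) : coefA (n+1) 0 = - (coefA n 0 * X^(n+1)) := by
  rw [coefA, coefA]
  rw [show ((0:ℕ):ℤ) = (0:ℤ) by norm_num, B_zero, B_zero]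
  have e1 : en (n+1) 0 = T (n+1) := by rw [en, if_neg (by omega)]; norm_num
  have e2 : en n 0 = T n := by rw [en, if_neg (by omega)]; norm_num
  rw [e1, e2, T_succ, show T n + n + 1 = T n + (n+1) by ring]
  rw [show (0 + (n+1) + 1) = (0 + n + 1) + 1 by omega, pow_succ, pow_add]
  ring

lemma rhs_mul (n : ℕ) :
    rhsA n * ((Polynomial.X - Polynomial.C (X^(n+1))) *
      (1 - Polynomial.X * Polynomial.C (X^(n+1)))) = rhsA (n+1) := by
  have hC : (Polynomial.C (X^(n+1)) : P) * Polynomial.C (X^(n+1))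
      = Polynomial.C (X^(2*n+2)) := by
    rw [← Polynomial.C_mul, ← pow_add, show n+1+(n+1) = 2*n+2 by omega]
  have hexp : rhsA n * ((Polynomial.X - Polynomial.C (X^(n+1))) *
      (1 - Polynomial.X * Polynomial.C (X^(n+1))))
      = rhsA n * Polynomial.X
        + (rhsA n * Polynomial.X) * Polynomial.C (X^(2*n+2))
        - ((rhsA n * Polynomial.X) * Polynomial.X) * Polynomial.C (X^(n+1))
        - rhsA n * Polynomial.C (X^(n+1)) := by
    rw [← hC]; ring
  rw [hexp]
  apply Polynomial.ext
  intro j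
  simp only [Polynomial.coeff_add, Polynomial.coeff_sub, Polynomial.coeff_mul_C]
  match j with
  | 0 =>
    rw [Polynomial.coeff_mul_X_zero, Polynomial.coeff_mul_X_zero, coeff_rhsA, coeff_rhsA,
      coef_zero]
    ring
  | 1 =>
    rw [show (1:ℕ) = 0 + 1 from rfl]
    simp only [Polynomial.coeff_mul_X, Polynomial.coeff_mul_X_zero]
    rw [coeff_rhsA, coeff_rhsA, coeff_rhsA, coef_step n 1 le_rfl]
    rw [show ((1:ℕ):ℤ) - 2 = -1 by norm_num, B_out (2*n+1) (-1) (by omega)]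
    rw [show (1:ℕ) - 1 = 0 from rfl]
    ring
  | (j+2) =>
    rw [show j + 2 = (j+1) + 1 from rfl]
    simp only [Polynomial.coeff_mul_X]
    rw [coeff_rhsA, coeff_rhsA, coeff_rhsA, coeff_rhsA, coef_step n ((j+1)+1) (by omega)]
    rw [show (j+1) + 1 - 1 = j + 1 by omega]
    rw [coefA_neg2 n ((j+1)+1) (by omega), show (j+1) + 1 - 2 = j by omega]
    ring

theorem jtp (n : ℕ) : lhsA n = rhsA n := by
  induction n with
  | zero =>
    rw [lhsA, rhsA]
    rw [Finset.prod_range_one, Finset.prod_range_zero]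
    rw [show 2*0+2 = 2 by norm_num, Finset.sum_range_succ, Finset.sum_range_one]
    have c0 : coefA 0 0 = -1 := by
      rw [coefA, show ((0:ℕ):ℤ) = (0:ℤ) by norm_num, B_zero]
      rw [show en 0 0 = T 0 from rfl]
      show (-1)^1 * X^(T 0) * 1 = -1
      rw [show T 0 = 0 from rfl]
      ring
    have c1 : coefA 0 1 = 1 := by
      rw [coefA, show ((1:ℕ):ℤ) = ((1:ℕ):ℤ) from rfl]
      have : B (2*0+1) ((1:ℕ):ℤ) = 1 := by
        rw [show 2*0+1 = 1 by norm_num]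
        exact B_self 1
      rw [this]
      rw [show en 0 1 = T 0 from rfl, show T 0 = 0 from rfl]
      norm_num
    rw [c0, c1]
    rw [← Polynomial.C_mul_X_pow_eq_monomial, ← Polynomial.C_mul_X_pow_eq_monomial]
    simp only [pow_zero, pow_one, map_one, map_neg, mul_one, one_mul]
    ring
  | succ n ih =>
    have h1 : lhsA (n+1) = lhsA n * ((Polynomial.X - Polynomial.C (X^(n+1))) *
        (1 - Polynomial.X * Polynomial.C (X^(n+1)))) := by
      rw [lhsA, lhsA, Finset.prod_range_succ
        (fun i => Polynomial.X - Polynomial.C ((X : PowerSeries K)^i)) (n+1),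
        Finset.prod_range_succ (fun i => 1 - Polynomial.X * Polynomial.C ((X : PowerSeries K)^(i+1))) n]
      ring
    rw [h1, ih, rhs_mul]


/-- the Jacobi coefficient -/
def cJ (n k : ℕ) : PowerSeries K := (-1)^k * X^(T k) * B (2*n+1) ((n - k : ℕ))

lemma fp_def (m : ℕ) : fp m = ∏ i ∈ range m, (1 - X ^ (i + 1)) := rfl

lemma coefA_high (n k : ℕ) (hk : k ≤ n) : coefA n (n+1+k) = cJ n k := by
  rw [coefA, cJ]
  have hsgn : ((-1 : PowerSeries K))^(n+1+k+n+1) = (-1)^k := by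
    rw [show n+1+k+n+1 = k + 2*(n+1) by omega, pow_add, pow_mul]
    norm_num
  have hen : en n (n+1+k) = T k := by
    rw [en, if_pos (by omega)]
    congr 1
    omega
  have hB : B (2*n+1) ((n+1+k : ℕ)) = B (2*n+1) ((n - k : ℕ)) := by
    rw [B_symm (2*n+1) (n+1+k) (by omega), show 2*n+1 - (n+1+k) = n - k by omega]
  rw [hsgn, hen, hB]

lemma coefA_low (n k : ℕ) (hk : k ≤ n) : coefA n (n-k) = - cJ n k := by
  rw [coefA, cJ]
  have hsgn : ((-1 : PowerSeries K))^(n-k+n+1) = -(-1)^k := by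
    rw [show n-k+n+1 = (k + 2*(n-k)) + 1 by omega, pow_succ, pow_add, pow_mul]
    norm_num
  have hen : en n (n-k) = T k := by
    rw [en, if_neg (by omega)]
    rw [show n - (n-k) = k by omega]
  rw [hsgn, hen]
  ring

theorem jacobi (n : ℕ) :
    fp n ^ 2 = ∑ k ∈ range (n+1), cJ n k * ((2*k+1 : ℕ) : PowerSeries K) := by
  classical
  set W : P := (∏ i ∈ range n, (Polynomial.X - Polynomial.C (X^(i+1)))) *
    (∏ i ∈ range n, (1 - Polynomial.X * Polynomial.C (X^(i+1)))) with hW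
  set V : P := ∑ k ∈ range (n+1),
    Polynomial.C (cJ n k) * (Polynomial.X^(n-k) * ∑ i ∈ range (2*k+1), Polynomial.X^i) with hV
  have step1 : lhsA n = (Polynomial.X - 1) * W := by
    rw [lhsA, Finset.prod_range_succ'
      (fun i => Polynomial.X - Polynomial.C ((X : PowerSeries K)^i)) n]
    rw [pow_zero, map_one, hW]
    ring
  have step2 : rhsA n = (Polynomial.X - 1) * V := by
    rw [rhsA, show 2*n+2 = (n+1) + (n+1) by omega,
      Finset.sum_range_add (fun j => Polynomial.monomial j (coefA n j)) (n+1) (n+1)]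
    have hrefl : ∑ j ∈ range (n+1), Polynomial.monomial j (coefA n j)
        = ∑ k ∈ range (n+1), Polynomial.monomial (n-k) (coefA n (n-k)) := by
      rw [← Finset.sum_range_reflect]
      refine Finset.sum_congr rfl fun k hk => ?_
      congr 1 <;> omega
    rw [hrefl, hV, Finset.mul_sum, ← Finset.sum_add_distrib]
    refine Finset.sum_congr rfl fun k hk => ?_
    simp only [Finset.mem_range] at hk
    have hkn : k ≤ n := by omega
    have hgeom : (Polynomial.X^(n+1+k) : P) - Polynomial.X^(n-k)
        = (Polynomial.X - 1) * (Polynomial.X^(n-k) * ∑ i ∈ range (2*k+1), Polynomial.X^i) := by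
      have hg := geom_sum_mul (Polynomial.X : P) (2*k+1)
      calc (Polynomial.X^(n+1+k) : P) - Polynomial.X^(n-k)
          = Polynomial.X^(n-k) * (Polynomial.X^(2*k+1) - 1) := by
            rw [mul_sub, ← pow_add, show n-k+(2*k+1) = n+1+k by omega]
            ring
        _ = Polynomial.X^(n-k) * ((∑ i ∈ range (2*k+1), Polynomial.X^i) * (Polynomial.X - 1)) := by
            rw [hg]
        _ = _ := by ring
    rw [coefA_low n k hkn, coefA_high n k hkn]
    rw [← Polynomial.C_mul_X_pow_eq_monomial, ← Polynomial.C_mul_X_pow_eq_monomial]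
    rw [map_neg]
    calc (- Polynomial.C (cJ n k)) * Polynomial.X^(n-k)
          + Polynomial.C (cJ n k) * Polynomial.X^(n+1+k)
        = Polynomial.C (cJ n k) * (Polynomial.X^(n+1+k) - Polynomial.X^(n-k)) := by ring
      _ = Polynomial.C (cJ n k) * ((Polynomial.X - 1) *
            (Polynomial.X^(n-k) * ∑ i ∈ range (2*k+1), Polynomial.X^i)) := by rw [hgeom]
      _ = _ := by ring
  have hX1 : (Polynomial.X - 1 : P) ≠ 0 := by
    have := Polynomial.X_sub_C_ne_zero (1 : PowerSeries K)
    rwa [map_one] at this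
  have step3 : W = V := by
    apply mul_left_cancel₀ hX1
    rw [← step1, ← step2]
    exact jtp n
  have heval := congrArg (Polynomial.eval (1 : PowerSeries K)) step3
  rw [hW, hV] at heval
  simp only [Polynomial.eval_mul, Polynomial.eval_prod, Polynomial.eval_sub, Polynomial.eval_add,
    Polynomial.eval_one, Polynomial.eval_X, Polynomial.eval_C, Polynomial.eval_pow,
    Polynomial.eval_finset_sum, one_pow, one_mul, mul_one, Finset.sum_const, Finset.card_range,
    nsmul_eq_mul] at heval
  rw [show fp n ^ 2 = fp n * fp n by ring, fp_def]
  convert heval using 2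
instance : CharP (PowerSeries K) 7 :=
  charP_of_injective_ringHom (f := (PowerSeries.C (R := K))) PowerSeries.C_injective 7

lemma constantCoeff_one_sub (t : ℕ) : constantCoeff (R := K) (1 - X ^ (t + 1)) ≠ 0 := by
  simp

/-- fp m * Pg m = 1 -/
lemma fp_mul_Pg (m : ℕ) : fp m * Pg m = 1 := by
  rw [fp, Pg, ← Finset.prod_mul_distrib]
  rw [Finset.prod_congr rfl (fun i _ => PowerSeries.mul_inv_cancel _ (constantCoeff_one_sub i))]
  exact Finset.prod_const_one

/-- T bounds and squares -/
lemma T_ge (k : ℕ) : k ≤ T k := by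
  induction k with
  | zero => simp [T]
  | succ k ih => rw [T_succ]; omega

lemma T_two (k : ℕ) : 2 * T k = k * (k + 1) := by
  induction k with
  | zero => simp [T]
  | succ k ih => rw [T_succ, mul_add, mul_add, ih]; ring

lemma T_sq (k : ℕ) : (2*k+1)^2 = 8 * T k + 1 := by
  have h := T_two k
  nlinarith [h]

/-- X^d divides products of high-order 1 - X^(i+1) minus 1 -/
lemma prod_high_dvd (s : Finset ℕ) (d : ℕ) (h : ∀ i ∈ s, d ≤ i + 1) :
    (X : PowerSeries K)^d ∣ (∏ i ∈ s, (1 - X^(i+1))) - 1 := by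
  classical
  induction s using Finset.induction_on with
  | empty => simp
  | @insert j s hjs ih =>
    rw [Finset.prod_insert hjs]
    have h1 : (X : PowerSeries K)^d ∣ (∏ i ∈ s, (1 - (X : PowerSeries K)^(i+1))) - 1 :=
      ih (fun i hi => h i (Finset.mem_insert_of_mem hi))
    have h2 : (X : PowerSeries K)^d ∣ X^(j+1) :=
      pow_dvd_pow X (h j (Finset.mem_insert_self j s))
    have key : (1 - (X : PowerSeries K)^(j+1)) * (∏ i ∈ s, (1 - (X : PowerSeries K)^(i+1))) - 1
        = (1 - (X : PowerSeries K)^(j+1)) * ((∏ i ∈ s, (1 - (X : PowerSeries K)^(i+1))) - 1)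
          - X^(j+1) := by ring
    rw [key]
    exact dvd_sub (Dvd.dvd.mul_left h1 _) h2

lemma coeff_prod_high (s : Finset ℕ) (d : ℕ) (h : ∀ i ∈ s, d ≤ i + 1) (w : ℕ) (hw : w < d) :
    coeff (R := K) w (∏ i ∈ s, (1 - X^(i+1))) = if w = 0 then 1 else 0 := by
  have h1 := prod_high_dvd s d h
  rw [PowerSeries.X_pow_dvd_iff] at h1
  have h2 := h1 w hw
  rw [map_sub] at h2
  rw [sub_eq_zero.mp h2, PowerSeries.coeff_one]

lemma fp_Ico (a b : ℕ) (h : a ≤ b) :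
    fp b = fp a * ∏ i ∈ Finset.Ico a b, (1 - X^(i+1)) := by
  rw [fp_def, fp_def, Finset.range_eq_Ico, Finset.range_eq_Ico]
  exact (Finset.prod_Ico_consecutive (fun i => (1 - (X : PowerSeries K)^(i+1))) (Nat.zero_le a) h).symm

/-- fp m * B (2m+1) (m-k) has delta coefficients in low degrees -/
lemma coeff_fp_mul_B (m k w : ℕ) (hk : k ≤ m) (hw : w ≤ m - k) :
    coeff (R := K) w (fp m * B (2*m+1) ((m - k : ℕ))) = if w = 0 then 1 else 0 := by
  have hprod := B_prod (2*m+1) (m-k) (by omega)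
  rw [show 2*m+1 - (m-k) = m+k+1 by omega] at hprod
  have h1 : fp (2*m+1) = fp (m+k+1) * ∏ i ∈ Finset.Ico (m+k+1) (2*m+1), (1 - X^(i+1)) :=
    fp_Ico _ _ (by omega)
  have h2 : fp m = fp (m-k) * ∏ i ∈ Finset.Ico (m-k) m, (1 - X^(i+1)) :=
    fp_Ico _ _ (by omega)
  -- cancel fp (m+k+1)
  have h3 : B (2*m+1) ((m-k : ℕ)) * fp (m-k)
      = ∏ i ∈ Finset.Ico (m+k+1) (2*m+1), (1 - X^(i+1)) := by
    apply mul_right_cancel₀ (fp_ne_zero (m+k+1))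
    calc B (2*m+1) ((m-k:ℕ)) * fp (m-k) * fp (m+k+1) = fp (2*m+1) := hprod.symm
      _ = (∏ i ∈ Finset.Ico (m+k+1) (2*m+1), (1 - X^(i+1))) * fp (m+k+1) := by
          rw [h1]; ring
  have h4 : fp m * B (2*m+1) ((m-k : ℕ))
      = (∏ i ∈ Finset.Ico (m-k) m, (1 - X^(i+1)))
        * ∏ i ∈ Finset.Ico (m+k+1) (2*m+1), (1 - X^(i+1)) := by
    rw [h2]
    calc fp (m-k) * (∏ i ∈ Finset.Ico (m-k) m, (1 - X^(i+1))) * B (2*m+1) ((m-k:ℕ))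
        = (∏ i ∈ Finset.Ico (m-k) m, (1 - X^(i+1))) * (B (2*m+1) ((m-k:ℕ)) * fp (m-k)) := by
          ring
      _ = _ := by rw [h3]
  rw [h4, ← Finset.prod_union]
  · apply coeff_prod_high _ (m-k+1)
    · intro i hi
      simp only [Finset.mem_union, Finset.mem_Ico] at hi
      omega
    · omega
  · rw [Finset.disjoint_left]
    intro i hi1 hi2
    simp only [Finset.mem_Ico] at hi1 hi2
    omega

lemma coeff_inv_factor (t c : ℕ) :
    coeff (R := K) c ((1 - X^(t+1))⁻¹) = if (t+1) ∣ c then 1 else 0 := by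
  rw [num_series', coeff_indicator]
  by_cases h : (t+1) ∣ c <;> simp [h]

/-- coefficients of f^3 -/
def jaco (u : ℕ) : K := ∑ k ∈ range (u+1), if T k = u then (-1)^k * ((2*k+1 : ℕ) : K) else 0

lemma coeff_fp3 (a m u : ℕ) (hm : 2*a ≤ m) (hu : u ≤ a) :
    coeff (R := K) u (fp m ^ 3) = jaco u := by
  have h3 : fp m ^ 3 = ∑ k ∈ range (m+1),
      PowerSeries.C (R := K) ((-1)^k * ((2*k+1:ℕ) : K))
        * (X^(T k) * (fp m * B (2*m+1) ((m-k : ℕ)))) := by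
    rw [show (3:ℕ) = 2+1 from rfl, pow_succ, jacobi, Finset.sum_mul]
    refine Finset.sum_congr rfl fun k _ => ?_
    rw [cJ, map_mul, map_pow, map_neg, map_one, map_natCast]
    ring
  rw [h3, map_sum]
  have hterm : ∀ k ∈ range (m+1),
      coeff (R := K) u (PowerSeries.C (R := K) ((-1)^k * ((2*k+1:ℕ) : K))
        * (X^(T k) * (fp m * B (2*m+1) ((m-k : ℕ)))))
      = if T k = u then (-1)^k * ((2*k+1 : ℕ) : K) else 0 := by
    intro k hk
    rw [PowerSeries.coeff_C_mul, PowerSeries.coeff_X_pow_mul']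
    split_ifs with h1 h2 h2
    · -- T k ≤ u and T k = u
      rw [coeff_fp_mul_B m k (u - T k) (by have := T_ge k; omega) (by have := T_ge k; omega)]
      rw [if_pos (by omega)]
      ring
    · -- T k ≤ u, T k ≠ u
      rw [coeff_fp_mul_B m k (u - T k) (by have := T_ge k; omega) (by have := T_ge k; omega)]
      rw [if_neg (by omega)]
      ring
    · omega
    · ring
  rw [Finset.sum_congr rfl hterm, jaco]
  refine (Finset.sum_subset (Finset.range_subset_range.mpr (by omega)) ?_).symm
  intro k hk hk2
  simp only [Finset.mem_range] at hk hk2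
  rw [if_neg]
  have := T_ge k
  omega

lemma key7 (j k : ℕ) (h : (T j + T k) % 7 = 5) :
    ((-1:K)^j * ((2*j+1 : ℕ):K)) * ((-1:K)^k * ((2*k+1:ℕ):K)) = 0 := by
  have hd : ∀ x y : ZMod 7, x^2 + y^2 = 0 → x * y = 0 := by decide
  have hn : (2*j+1)^2 + (2*k+1)^2 = 8*(T j + T k) + 2 := by
    rw [T_sq, T_sq]; ring
  have hx : ((2*j+1:ℕ) : K)^2 + ((2*k+1:ℕ):K)^2 = 0 := by
    rw [← Nat.cast_pow, ← Nat.cast_pow, ← Nat.cast_add, hn]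
    rw [ZMod.natCast_eq_zero_iff]
    omega
  have hz := hd _ _ hx
  calc ((-1:K)^j * ((2*j+1 : ℕ):K)) * ((-1:K)^k * ((2*k+1:ℕ):K))
      = ((-1:K)^j * (-1:K)^k) * (((2*j+1:ℕ):K) * ((2*k+1:ℕ):K)) := by ring
    _ = 0 := by rw [hz, mul_zero]

lemma coeff_fp6 (a m : ℕ) (hm : 2*a ≤ m) (ha : a % 7 = 5) :
    coeff (R := K) a (fp m ^ 6) = 0 := by
  rw [show (6:ℕ) = 3+3 from rfl, pow_add, PowerSeries.coeff_mul]
  apply Finset.sum_eq_zero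
  rintro ⟨u, v⟩ huv
  rw [Finset.HasAntidiagonal.mem_antidiagonal] at huv
  simp only at huv ⊢
  rw [coeff_fp3 a m u hm (by omega), coeff_fp3 a m v hm (by omega)]
  rw [jaco, jaco, Finset.sum_mul_sum]
  apply Finset.sum_eq_zero
  intro j _
  apply Finset.sum_eq_zero
  intro k _
  split_ifs with h1 h2 h2
  · exact key7 j k (by omega)
  · rw [mul_zero]
  · rw [zero_mul]
  · rw [zero_mul]

lemma fp7 (m : ℕ) : fp m ^ 7 = ∏ i ∈ range m, (1 - X^(7*(i+1))) := by
  rw [fp_def, ← Finset.prod_pow]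
  refine Finset.prod_congr rfl fun i _ => ?_
  rw [sub_pow_char (1 : PowerSeries K) (X^(i+1)), one_pow, ← pow_mul,
    show (i+1)*7 = 7*(i+1) by ring]

def Pg7 (m : ℕ) : PowerSeries K := ∏ i ∈ range m, (1 - X^(7*(i+1)))⁻¹

lemma fp7_mul_Pg7 (m : ℕ) : fp m ^ 7 * Pg7 m = 1 := by
  rw [fp7, Pg7, ← Finset.prod_mul_distrib]
  have : ∀ i ∈ range m, (1 - (X:PowerSeries K)^(7*(i+1))) * (1 - X^(7*(i+1)))⁻¹ = 1 := by
    intro i _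
    apply PowerSeries.mul_inv_cancel
    rw [show 7*(i+1) = (7*i+6)+1 by ring]
    exact constantCoeff_one_sub _
  rw [Finset.prod_congr rfl this]
  exact Finset.prod_const_one

lemma main_id (m : ℕ) : Pg m = fp m ^ 6 * Pg7 m := by
  calc Pg m = Pg m * (fp m ^7 * Pg7 m) := by rw [fp7_mul_Pg7]; ring
    _ = (fp m * Pg m) * (fp m ^ 6 * Pg7 m) := by ring
    _ = fp m ^ 6 * Pg7 m := by rw [fp_mul_Pg]; ring

lemma coeff_Pg7 (m b : ℕ) (hb : ¬ 7 ∣ b) : coeff (R := K) b (Pg7 m) = 0 := by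
  rw [Pg7]
  induction m generalizing b with
  | zero =>
    rw [Finset.prod_range_zero]
    have hb0 : b ≠ 0 := by omega
    simp [PowerSeries.coeff_one, hb0]
  | succ m ih =>
    rw [Finset.prod_range_succ, PowerSeries.coeff_mul]
    apply Finset.sum_eq_zero
    rintro ⟨u, v⟩ huv
    rw [Finset.HasAntidiagonal.mem_antidiagonal] at huv
    simp only at huv ⊢
    by_cases h7 : 7 ∣ u
    · have hv : ¬ 7 ∣ v := by omega
      have h77 : (7:ℕ) ∣ 7*m+6+1 := ⟨m+1, by ring⟩
      rw [show 7*(m+1) = (7*m+6)+1 by ring, coeff_inv_factor (7*m+6) v,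
        if_neg (fun hd => hv (dvd_trans h77 hd)), mul_zero]
    · rw [ih u h7, zero_mul]

theorem partition_7n5_mod7' (n : Nat) :
    Fintype.card (Nat.Partition (7 * n + 5)) % 7 = 0 := by
  set N := 7*n+5 with hN
  set m := 2*N with hm
  have h1 : (Fintype.card (Nat.Partition N) : K) = coeff (R := K) N (Pg m) :=
    (coeff_Pg (by omega)).symm
  rw [main_id, PowerSeries.coeff_mul] at h1
  have h2 : ∀ p ∈ Finset.HasAntidiagonal.antidiagonal N,
      coeff (R := K) p.1 (fp m ^ 6) * coeff (R := K) p.2 (Pg7 m) = 0 := by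
    rintro ⟨u, v⟩ h
    rw [Finset.HasAntidiagonal.mem_antidiagonal] at h
    simp only at h ⊢
    by_cases h7 : 7 ∣ v
    · rw [coeff_fp6 u m (by omega) (by omega), zero_mul]
    · rw [coeff_Pg7 m v h7, mul_zero]
  rw [Finset.sum_eq_zero h2] at h1
  have h3 := (ZMod.natCast_eq_zero_iff _ 7).mp h1
  omega

end R7
end

/-- Ramanujan's congruence `p(7n+5) = 0 (mod 7)` for the partition function. -/
theorem partition_7n5_mod7 (n : Nat) :
    Fintype.card (Nat.Partition (7 * n + 5)) % 7 = 0 :=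
  R7.partition_7n5_mod7' n
end

section
/- For all n ≥ 0, a_4(7n+4) ≡ 0 (mod 7), where a_4(n) counts partitions of n with monochromatic even parts and odd parts in one of 4 colors. -/
/-- The formal power series `f m = prod_{i >= 1} (1 - q^(m*i))` in `ZZ[[q]]`, defined
coefficient-wise via the stabilizing finite partial products. -/
noncomputable def f (m : Nat) : PowerSeries Int :=
  PowerSeries.mk fun n =>
    PowerSeries.coeff (R := Int) n (Finset.prod (Finset.range (n + 1)) fun i => (1 - PowerSeries.X ^ (m * (i + 1))))

open Finset

variable {R : Type*} [CommRing R]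

/-- Gaussian binomial built from the Pascal recurrence `[m+1,j+1] = [m,j+1] + y^(m-j)[m,j]`. -/
def gb (y : R) : ℕ → ℕ → R
  | _, 0 => 1
  | 0, _+1 => 0
  | m+1, j+1 => gb y m (j+1) + y^(m-j) * gb y m j

@[simp] lemma gb_right_zero (y : R) (m : ℕ) : gb y m 0 = 1 := by cases m <;> rfl
@[simp] lemma gb_zero_succ (y : R) (j : ℕ) : gb y 0 (j+1) = 0 := rfl
lemma gb_step (y : R) (m j : ℕ) :
    gb y (m+1) (j+1) = gb y m (j+1) + y^(m-j) * gb y m j := rfl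

lemma gb_zero_of_lt (y : R) : ∀ m j, m < j → gb y m j = 0 := by
  intro m
  induction m with
  | zero => intro j hj; match j, hj with | j+1, _ => rfl
  | succ m ih =>
    intro j hj
    match j, hj with
    | j+1, hj =>
      rw [gb_step, ih _ (by omega), ih _ (by omega), mul_zero, add_zero]

lemma gb_diag (y : R) : ∀ m, gb y m m = 1 := by
  intro m
  induction m with
  | zero => rfl
  | succ m ih =>
    rw [gb_step, gb_zero_of_lt y m (m+1) (by omega), ih, Nat.sub_self, pow_zero, one_mul,
      zero_add]

lemma gb_R2 (y : R) : ∀ m j, gb y (m+1) (j+1) = y^(j+1) * gb y m (j+1) + gb y m j := by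
  intro m
  induction m with
  | zero =>
    intro j
    match j with
    | 0 => simp [gb_step]
    | j+1 => simp [gb_step, gb_zero_of_lt y 0 (j+2) (by omega)]
  | succ m ih =>
    intro j
    match j with
    | 0 =>
      conv_lhs => rw [gb_step y (m+1) 0, ih 0]
      conv_rhs => rw [gb_step y m 0]
      simp only [Nat.sub_zero, gb_right_zero, mul_one, pow_one, zero_add]
      ring
    | j+1 =>
      rcases lt_trichotomy j m with hj | hj | hj
      · conv_lhs => rw [gb_step y (m+1) (j+1), ih (j+1), ih j]
        conv_rhs => rw [gb_step y m (j+1), gb_step y m j]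
        simp only [Nat.succ_sub_succ]
        have hexp : y^(m-j) * y^(j+1) = y^(j+1+1) * y^(m-(j+1)) := by
          rw [← pow_add, ← pow_add]; congr 1; omega
        linear_combination gb y m (j+1) * hexp
      · subst hj
        rw [gb_diag, gb_zero_of_lt y (j+1) (j+1+1) (by omega), gb_diag]
        ring
      · rw [gb_zero_of_lt y (m+1+1) (j+1+1) (by omega),
          gb_zero_of_lt y (m+1) (j+1+1) (by omega),
          gb_zero_of_lt y (m+1) (j+1) (by omega)]
        ring

/-- triangular numbers -/
def tri (k : ℕ) : ℕ := ∑ i ∈ Finset.range (k+1), i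

lemma tri_succ (k : ℕ) : tri (k+1) = tri k + (k+1) := Finset.sum_range_succ _ _

lemma le_tri (k : ℕ) : k ≤ tri k := by
  induction k with
  | zero => simp [tri]
  | succ k ih => rw [tri_succ]; omega

lemma tri_mul_two (k : ℕ) : 2 * tri k = k * (k+1) := by
  rw [tri, mul_comm, Finset.sum_range_id_mul_two]
  simp [mul_comm]

/-- the exponent `T_{j-N}` (triangular number of the signed index) -/
def ee (N j : ℕ) : ℕ := if j < N then tri (N-j-1) else tri (j-N)

lemma ee_E1 (N j : ℕ) : ee (N+1) (j+1) = ee N j := by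
  unfold ee
  by_cases h : j < N
  · rw [if_pos (by omega), if_pos h]; congr 1; omega
  · rw [if_neg (by omega), if_neg h]; congr 1; omega

lemma ee_E2 (N j : ℕ) : N + ee N (j+1) = ee N j + (j+1) := by
  unfold ee
  rcases lt_trichotomy (j+1) N with h | h | h
  · rw [if_pos h, if_pos (by omega)]
    have h2 : N-j-1 = (N-(j+1)-1)+1 := by omega
    rw [h2, tri_succ]; omega
  · rw [if_neg (by omega), if_pos (by omega)]
    have h2 : j+1-N = 0 := by omega
    have h3 : N-j-1 = 0 := by omega
    rw [h2, h3]; unfold tri; simp; omega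
  · rw [if_neg (by omega), if_neg (by omega)]
    have h2 : j+1-N = (j-N)+1 := by omega
    rw [h2, tri_succ]; omega

lemma ee_E3 (N i : ℕ) (h : i + 1 ≤ 2*N) : (2*N - i) + ee N (i+1) = (N+1) + ee N i := by
  unfold ee
  rcases lt_trichotomy (i+1) N with h1 | h1 | h1
  · rw [if_pos h1, if_pos (by omega)]
    have h2 : N-i-1 = (N-(i+1)-1)+1 := by omega
    rw [h2, tri_succ]; omega
  · rw [if_neg (by omega), if_pos (by omega)]
    have h2 : i+1-N = 0 := by omega
    have h3 : N-i-1 = 0 := by omega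
    rw [h2, h3]; unfold tri; simp; omega
  · rw [if_neg (by omega), if_neg (by omega)]
    have h2 : i+1-N = (i-N)+1 := by omega
    rw [h2, tri_succ]; omega

lemma ee_left (N : ℕ) : ee N 0 = tri (N-1) := by
  unfold ee
  by_cases h : 0 < N
  · rw [if_pos h]; norm_num
  · rw [if_neg h]; congr 1; omega

lemma ee_hi (N k : ℕ) : ee N (N+k) = tri k := by
  unfold ee; rw [if_neg (by omega)]; congr 1; omega

lemma ee_lo (N k : ℕ) (h : k + 1 ≤ N) : ee N (N-1-k) = tri k := by
  unfold ee; rw [if_pos (by omega)]; congr 1; omega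

/-- `A(N,j) = gb(2N,j) * y^(ee N j)` -/
def Aa (y : R) (N j : ℕ) : R := gb y (2*N) j * y^(ee N j)

lemma Aa_zero_of_lt (y : R) (N j : ℕ) (h : 2*N < j) : Aa y N j = 0 := by
  unfold Aa; rw [gb_zero_of_lt y _ _ h, zero_mul]

lemma key (y : R) (N j : ℕ) :
    Aa y (N+1) (j+1) = (1 + y^(2*N+1)) * Aa y N j + y^N * Aa y N (j+1)
      + y^(N+1) * (if j = 0 then 0 else Aa y N (j-1)) := by
  match j with
  | 0 =>
    norm_num
    unfold Aa
    have e1 : ee (N+1) 1 = ee N 0 := ee_E1 N 0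
    have hgb : gb y (2*(N+1)) 1 = y * gb y (2*N) 1 + y^(2*N+1) + 1 := by
      have h1 : 2*(N+1) = (2*N+1)+1 := by omega
      rw [h1, gb_R2 y (2*N+1) 0]
      rw [gb_step y (2*N) 0]
      simp only [Nat.sub_zero, gb_right_zero, mul_one, pow_one]
      ring
    rw [e1, hgb]
    have h2 : y^1 * y^(ee N 0) = y^N * y^(ee N 1) := by
      rw [← pow_add, ← pow_add]
      have h3 := ee_E2 N 0
      norm_num at h3
      congr 1; omega
    calc (y * gb y (2*N) 1 + y^(2*N+1) + 1) * y^(ee N 0)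
        = (1 + y^(2*N+1)) * (1 * y^(ee N 0)) + (y^1 * y^(ee N 0)) * gb y (2*N) 1 := by ring
      _ = (1 + y^(2*N+1)) * (gb y (2*N) 0 * y^(ee N 0)) + y^N * (gb y (2*N) 1 * y^(ee N 1)) := by
          rw [h2]; simp only [gb_right_zero]; ring
      _ = _ := by norm_num
  | i+1 =>
    simp only [if_neg (Nat.succ_ne_zero i), Nat.add_sub_cancel]
    by_cases hle : i + 1 ≤ 2*N
    · unfold Aa
      have e1 : ee (N+1) (i+1+1) = ee N (i+1) := ee_E1 N (i+1)
      have hgb : gb y (2*(N+1)) (i+1+1) =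
          y^(i+2) * gb y (2*N) (i+1+1) + y^(i+2) * y^(2*N-(i+1)) * gb y (2*N) (i+1)
          + gb y (2*N) (i+1) + y^(2*N-i) * gb y (2*N) i := by
        have h1 : 2*(N+1) = (2*N+1)+1 := by omega
        rw [h1, gb_R2 y (2*N+1) (i+1), gb_step y (2*N) (i+1), gb_step y (2*N) i]
        ring
      rw [e1, hgb]
      have h1 : y^(i+2) * y^(ee N (i+1)) = y^N * y^(ee N (i+1+1)) := by
        rw [← pow_add, ← pow_add]
        have h4 := ee_E2 N (i+1)
        congr 1; omega
      have h2 : y^(i+2) * y^(2*N-(i+1)) * y^(ee N (i+1)) = y^(2*N+1) * y^(ee N (i+1)) := by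
        rw [← pow_add, ← pow_add, ← pow_add]
        congr 1; omega
      have h3 : y^(2*N-i) * y^(ee N (i+1)) = y^(N+1) * y^(ee N i) := by
        rw [← pow_add, ← pow_add]
        have h5 := ee_E3 N i hle
        congr 1 <;> omega
      calc (y^(i+2) * gb y (2*N) (i+1+1) + y^(i+2) * y^(2*N-(i+1)) * gb y (2*N) (i+1)
            + gb y (2*N) (i+1) + y^(2*N-i) * gb y (2*N) i) * y^(ee N (i+1))
          = (y^(i+2) * y^(ee N (i+1))) * gb y (2*N) (i+1+1)
            + (y^(i+2) * y^(2*N-(i+1)) * y^(ee N (i+1))) * gb y (2*N) (i+1)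
            + gb y (2*N) (i+1) * y^(ee N (i+1))
            + (y^(2*N-i) * y^(ee N (i+1))) * gb y (2*N) i := by ring
        _ = _ := by rw [h1, h2, h3]; ring
    · rcases eq_or_lt_of_le (by omega : 2*N + 2 ≤ i + 1 + 1) with h | h
      · -- i+1 = 2N+1 : boundary term
        have hi : i = 2*N := by omega
        subst hi
        rw [Aa_zero_of_lt y N (2*N+1+1) (by omega), Aa_zero_of_lt y N (2*N+1) (by omega)]
        unfold Aa
        have hgb1 : gb y (2*(N+1)) (2*N+1+1) = 1 := by
          rw [show 2*(N+1) = 2*N+1+1 from by omega]; exact gb_diag y _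
        have hgb2 : gb y (2*N) (2*N) = 1 := gb_diag y _
        rw [hgb1, hgb2]
        have hee1 : ee (N+1) (2*N+1+1) = tri (N+1) := by
          rw [show 2*N+1+1 = (N+1)+(N+1) from by omega]; exact ee_hi (N+1) (N+1)
        have hee2 : ee N (2*N) = tri N := by
          rw [show 2*N = N + N from by omega]; exact ee_hi N N
        rw [hee1, hee2]
        simp only [one_mul, mul_zero, add_zero, zero_add]
        rw [← pow_add]
        congr 1
        rw [tri_succ]
        omega
      · rw [Aa_zero_of_lt y (N+1) (i+1+1) (by omega), Aa_zero_of_lt y N (i+1) (by omega),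
          Aa_zero_of_lt y N (i+1+1) (by omega), Aa_zero_of_lt y N i (by omega)]
        ring

def dZ (N j : ℕ) : ℤ := (-1)^(N+j)
def cS (N j : ℕ) : ℤ := (-1)^(N+j) * ((j:ℤ) - N)

lemma dZ_shift (N j : ℕ) : dZ (N+1) (j+1) = dZ N j := by
  unfold dZ; rw [show N+1+(j+1) = (N+j)+2 from by omega, pow_add]; norm_num

lemma dZ_neg (N j : ℕ) : dZ N (j+1) = -dZ N j := by
  unfold dZ; rw [show N+(j+1) = (N+j)+1 from by omega, pow_succ]; ring

lemma cS_shift (N j : ℕ) : cS (N+1) (j+1) = cS N j := by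
  unfold cS; rw [show N+1+(j+1) = (N+j)+2 from by omega, pow_add]
  push_cast; ring

lemma cS_rel (N j : ℕ) : cS N (j+1) = -cS N j - dZ N j := by
  unfold cS dZ; rw [show N+(j+1) = (N+j)+1 from by omega, pow_succ]
  push_cast; ring

def Py (y : R) (M : ℕ) : R := ∏ i ∈ Finset.range M, (1 - y^(i+1))

def Zy (y : R) (N : ℕ) : R := ∑ j ∈ Finset.range (2*N+1), ((dZ N j : ℤ) : R) * Aa y N j
def Sy (y : R) (N : ℕ) : R := ∑ j ∈ Finset.range (2*N+1), ((cS N j : ℤ) : R) * Aa y N j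

lemma Aa_left (y : R) (N : ℕ) : Aa y N 0 = y^(tri (N-1)) := by
  unfold Aa; rw [gb_right_zero, ee_left, one_mul]

lemma sum_Aa_top (y : R) (w : ℕ → ℤ) (N : ℕ) :
    ∑ j ∈ Finset.range (2*N+3), ((w j : ℤ) : R) * Aa y N j
      = ∑ j ∈ Finset.range (2*N+1), ((w j : ℤ) : R) * Aa y N j := by
  rw [show 2*N+3 = (2*N+2)+1 from rfl, Finset.sum_range_succ,
    show 2*N+2 = (2*N+1)+1 from rfl, Finset.sum_range_succ,
    Aa_zero_of_lt y N (2*N+1) (by omega), Aa_zero_of_lt y N (2*N+2) (by omega)]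
  ring

lemma shiftA (y : R) (w : ℕ → ℤ) (N : ℕ) :
    ∑ j ∈ Finset.range (2*N+2), ((w (j+1) : ℤ) : R) * Aa y N (j+1)
      = ∑ j ∈ Finset.range (2*N+1), ((w j : ℤ) : R) * Aa y N j - ((w 0 : ℤ) : R) * Aa y N 0 := by
  have h := Finset.sum_range_succ' (fun j => ((w j : ℤ) : R) * Aa y N j) (2*N+2)
  rw [sum_Aa_top y w N] at h
  exact eq_sub_of_add_eq h.symm

/-- The expansion of `Σ_j w(j) A(N+2,j)` obtained from `key`. -/
lemma sum_step (y : R) (w : ℕ → ℤ) (N : ℕ) :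
    ∑ j ∈ Finset.range (2*(N+2)+1), ((w j : ℤ) : R) * Aa y (N+2) j
      = ((w 0 : ℤ) : R) * Aa y (N+2) 0
        + (∑ j ∈ Finset.range (2*(N+1)+2), ((w (j+1) : ℤ) : R) * ((1 + y^(2*(N+1)+1)) * Aa y (N+1) j))
        + (∑ j ∈ Finset.range (2*(N+1)+2), ((w (j+1) : ℤ) : R) * (y^(N+1) * Aa y (N+1) (j+1)))
        + (∑ j ∈ Finset.range (2*(N+1)+1), ((w (j+2) : ℤ) : R) * (y^(N+2) * Aa y (N+1) j)) := by
  rw [show 2*(N+2)+1 = (2*(N+1)+2)+1 from by omega, Finset.sum_range_succ']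
  have hsummand : ∀ j ∈ Finset.range (2*(N+1)+2), ((w (j+1) : ℤ) : R) * Aa y (N+2) (j+1)
      = ((w (j+1) : ℤ) : R) * ((1 + y^(2*(N+1)+1)) * Aa y (N+1) j)
        + ((w (j+1) : ℤ) : R) * (y^(N+1) * Aa y (N+1) (j+1))
        + ((w (j+1) : ℤ) : R) * (y^(N+2) * (if j = 0 then 0 else Aa y (N+1) (j-1))) := by
    intro j _
    rw [show (N+2) = (N+1)+1 from rfl, key y (N+1) j]
    ring
  rw [Finset.sum_congr rfl hsummand, Finset.sum_add_distrib, Finset.sum_add_distrib]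
  have h3 : ∑ j ∈ Finset.range (2*(N+1)+2),
      ((w (j+1) : ℤ) : R) * (y^(N+2) * (if j = 0 then 0 else Aa y (N+1) (j-1)))
      = ∑ j ∈ Finset.range (2*(N+1)+1), ((w (j+2) : ℤ) : R) * (y^(N+2) * Aa y (N+1) j) := by
    rw [show 2*(N+1)+2 = (2*(N+1)+1)+1 from rfl, Finset.sum_range_succ']
    simp only [Nat.add_sub_cancel, Nat.succ_ne_zero, if_false, if_pos rfl, ite_true,
      mul_zero, add_zero]
  rw [h3]
  ring

lemma dZ_zero (N : ℕ) : dZ N 0 = (-1)^N := by unfold dZ; norm_num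

lemma cS_zero (N : ℕ) : cS N 0 = (-1)^N * (-(N:ℤ)) := by unfold cS; norm_num

lemma Py_succ (y : R) (M : ℕ) : Py y (M+1) = Py y M * (1 - y^(M+1)) :=
  Finset.prod_range_succ _ _

lemma gb_two_one (y : R) : gb y 2 1 = 1 + y := by
  rw [gb_step y 1 0, gb_step y 0 0]
  simp

lemma tri_zero : tri 0 = 0 := by simp [tri]
lemma tri_one : tri 1 = 1 := by simp [tri, Finset.sum_range_succ]

lemma Zy_base (y : R) : Zy y 1 = 0 := by
  unfold Zy
  rw [show 2*1+1 = 3 from rfl, Finset.sum_range_succ, Finset.sum_range_succ,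
    Finset.sum_range_one]
  unfold Aa
  rw [show 2*1 = 2 from rfl, gb_two_one, gb_right_zero, gb_diag,
    show ee 1 0 = 0 from by rw [ee_left]; simp [tri_zero],
    show ee 1 1 = 0 from by have := ee_hi 1 0; simpa [tri_zero] using this,
    show ee 1 2 = 1 from by have := ee_hi 1 1; simpa [tri_one] using this,
    show dZ 1 0 = -1 from by unfold dZ; norm_num,
    show dZ 1 1 = 1 from by unfold dZ; norm_num,
    show dZ 1 2 = -1 from by unfold dZ; norm_num]
  push_cast
  ring

lemma Sy_base (y : R) : Sy y 1 = Py y 1 * Py y 0 := by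
  unfold Sy Py
  rw [show 2*1+1 = 3 from rfl, Finset.sum_range_succ, Finset.sum_range_succ,
    Finset.sum_range_one]
  unfold Aa
  rw [show 2*1 = 2 from rfl, gb_two_one, gb_right_zero, gb_diag,
    show ee 1 0 = 0 from by rw [ee_left]; simp [tri_zero],
    show ee 1 1 = 0 from by have := ee_hi 1 0; simpa [tri_zero] using this,
    show ee 1 2 = 1 from by have := ee_hi 1 1; simpa [tri_one] using this,
    show cS 1 0 = 1 from by unfold cS; norm_num,
    show cS 1 1 = 0 from by unfold cS; norm_num,
    show cS 1 2 = -1 from by unfold cS; norm_num]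
  rw [Finset.prod_range_one, Finset.prod_range_zero]
  push_cast
  ring

lemma Zy_all (y : R) (N : ℕ) : Zy y (N+1) = 0 := by
  induction N with
  | zero => exact Zy_base y
  | succ N hZ =>
    set M := N + 1 with hM
    show Zy y (N+2) = 0
    unfold Zy
    rw [sum_step y (dZ (N+2)) N]
    -- rewrite weights
    have hw1 : ∀ j ∈ Finset.range (2*M+2), ((dZ (N+2) (j+1) : ℤ) : R) * ((1 + y^(2*M+1)) * Aa y M j)
        = (1 + y^(2*M+1)) * (((dZ M j : ℤ) : R) * Aa y M j) := by
      intro j _; rw [show N+2 = M+1 from rfl, dZ_shift M j]; ring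
    have hw2 : ∀ j ∈ Finset.range (2*M+2), ((dZ (N+2) (j+1) : ℤ) : R) * (y^M * Aa y M (j+1))
        = -(y^M * (((dZ M (j+1) : ℤ) : R) * Aa y M (j+1))) := by
      intro j _
      rw [show N+2 = M+1 from rfl, dZ_shift M j, dZ_neg M j]
      push_cast; ring
    have hw3 : ∀ j ∈ Finset.range (2*M+1), ((dZ (N+2) (j+2) : ℤ) : R) * (y^(M+1) * Aa y M j)
        = -(y^(M+1) * (((dZ M j : ℤ) : R) * Aa y M j)) := by
      intro j _
      rw [show N+2 = M+1 from rfl, dZ_shift M (j+1), dZ_neg M j]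
      push_cast; ring
    rw [Finset.sum_congr rfl hw1, Finset.sum_congr rfl hw2, Finset.sum_congr rfl hw3]
    rw [← Finset.mul_sum, Finset.sum_neg_distrib, Finset.sum_neg_distrib,
      ← Finset.mul_sum, ← Finset.mul_sum]
    rw [show (2*M+2) = (2*M+1)+1 from rfl, Finset.sum_range_succ,
      Aa_zero_of_lt y M (2*M+1) (by omega)]
    rw [shiftA y (dZ M) M]
    have hzy : ∑ j ∈ Finset.range (2*M+1), ((dZ M j : ℤ) : R) * Aa y M j = 0 := hZ
    rw [hzy]
    rw [show Aa y (N+2) 0 = y^(tri (M)) from by rw [Aa_left]; norm_num; rfl,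
      show Aa y M 0 = y^(tri N) from by rw [Aa_left]; norm_num; rfl,
      show dZ (N+2) 0 = (-1)^N from by rw [dZ_zero]; rw [show N+2 = N+1+1 from rfl, pow_succ, pow_succ]; ring,
      show dZ M 0 = -(-1)^N from by rw [dZ_zero]; rw [pow_succ]; ring,
      show tri M = tri N + M from by rw [hM, tri_succ]]
    push_cast
    rw [pow_add]
    ring

lemma Sy_all (y : R) (N : ℕ) : Sy y (N+1) = Py y (N+1) * Py y N := by
  induction N with
  | zero => exact Sy_base y
  | succ N hS =>
    set M := N + 1 with hM
    show Sy y (N+2) = _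
    unfold Sy
    rw [sum_step y (cS (N+2)) N]
    have hw1 : ∀ j ∈ Finset.range (2*M+2), ((cS (N+2) (j+1) : ℤ) : R) * ((1 + y^(2*M+1)) * Aa y M j)
        = (1 + y^(2*M+1)) * (((cS M j : ℤ) : R) * Aa y M j) := by
      intro j _; rw [show N+2 = M+1 from rfl, cS_shift M j]; ring
    have hw2 : ∀ j ∈ Finset.range (2*M+2), ((cS (N+2) (j+1) : ℤ) : R) * (y^M * Aa y M (j+1))
        = -(y^M * (((cS M (j+1) : ℤ) : R) * Aa y M (j+1)))
          + y^M * (((dZ M (j+1) : ℤ) : R) * Aa y M (j+1)) := by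
      intro j _
      rw [show N+2 = M+1 from rfl, cS_shift M j]
      have h1 : cS M j = -cS M (j+1) + dZ M (j+1) := by
        rw [cS_rel M j, dZ_neg M j]; ring
      rw [h1]
      push_cast; ring
    have hw3 : ∀ j ∈ Finset.range (2*M+1), ((cS (N+2) (j+2) : ℤ) : R) * (y^(M+1) * Aa y M j)
        = -(y^(M+1) * (((cS M j : ℤ) : R) * Aa y M j))
          - y^(M+1) * (((dZ M j : ℤ) : R) * Aa y M j) := by
      intro j _
      rw [show N+2 = M+1 from rfl, cS_shift M (j+1), cS_rel M j]
      push_cast; ring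
    rw [Finset.sum_congr rfl hw1, Finset.sum_congr rfl hw2, Finset.sum_congr rfl hw3]
    rw [← Finset.mul_sum, Finset.sum_add_distrib, Finset.sum_neg_distrib,
      Finset.sum_sub_distrib, Finset.sum_neg_distrib,
      ← Finset.mul_sum, ← Finset.mul_sum, ← Finset.mul_sum, ← Finset.mul_sum]
    rw [show (2*M+2) = (2*M+1)+1 from rfl, Finset.sum_range_succ,
      Aa_zero_of_lt y M (2*M+1) (by omega)]
    rw [shiftA y (cS M) M, shiftA y (dZ M) M]
    have hzy : ∑ j ∈ Finset.range (2*M+1), ((dZ M j : ℤ) : R) * Aa y M j = 0 := Zy_all y N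
    have hsy : ∑ j ∈ Finset.range (2*M+1), ((cS M j : ℤ) : R) * Aa y M j
        = Py y M * Py y N := hS
    rw [hzy, hsy]
    rw [show Aa y (N+2) 0 = y^(tri M) from by rw [Aa_left]; norm_num; rfl,
      show Aa y M 0 = y^(tri N) from by rw [Aa_left]; norm_num; rfl,
      show cS (N+2) 0 = -((-1)^N * ((M:ℤ)+1)) from by
        rw [cS_zero]; rw [show N+2 = N+1+1 from rfl, pow_succ, pow_succ]; push_cast [hM]; ring,
      show cS M 0 = (-1)^N * (M : ℤ) from by
        rw [cS_zero]; rw [pow_succ]; push_cast; ring,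
      show dZ M 0 = -(-1)^N from by rw [dZ_zero]; rw [pow_succ]; ring,
      show tri M = tri N + M from by rw [hM, tri_succ]]
    rw [Py_succ y M, show Py y M = Py y N * (1 - y^M) from Py_succ y N]
    push_cast
    rw [pow_add, show 2*M+1 = M + (M+1) from by omega, pow_add]
    ring

lemma W_zero (y : R) (m j : ℕ) (h : m < j) :
    (∏ i ∈ Finset.range j, (1 - y^(m+1+i-j))) = 0 := by
  apply Finset.prod_eq_zero (Finset.mem_range.mpr (show j-m-1 < j from by omega))
  rw [show m+1+(j-m-1)-j = 0 from by omega]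
  simp

lemma W_eq (y : R) : ∀ m j, Py y j * gb y m j = ∏ i ∈ Finset.range j, (1 - y^(m+1+i-j)) := by
  intro m
  induction m with
  | zero =>
    intro j
    match j with
    | 0 => simp [Py]
    | j'+1 =>
      rw [gb_zero_of_lt y 0 (j'+1) (by omega), mul_zero, W_zero y 0 (j'+1) (by omega)]
  | succ m ih =>
    intro j
    match j with
    | 0 => simp [Py]
    | j'+1 =>
      by_cases hle : j' ≤ m
      · rw [gb_step y m j', mul_add, ih (j'+1), Py_succ y j']
        have hW1 : (∏ i ∈ Finset.range (j'+1), (1 - y^(m+1+i-(j'+1))))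
            = (∏ i ∈ Finset.range j', (1 - y^(m+1+i-j'))) * (1 - y^(m-j')) := by
          rw [Finset.prod_range_succ']
          congr 1
          · exact Finset.prod_congr rfl (fun i _ => by congr 2; omega)
          · congr 2; omega
        have hW2 : (∏ i ∈ Finset.range (j'+1), (1 - y^(m+1+1+i-(j'+1))))
            = (∏ i ∈ Finset.range j', (1 - y^(m+1+i-j'))) * (1 - y^(m+1)) := by
          rw [Finset.prod_range_succ]
          congr 1
          · exact Finset.prod_congr rfl (fun i _ => by congr 2; omega)
          · congr 2; omega
        rw [hW1, hW2]
        have hexp : y^(m-j') * y^(j'+1) = y^(m+1) := by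
          rw [← pow_add]; congr 1; omega
        linear_combination y^(m-j') * (1 - y^(j'+1)) * (ih j')
          - (∏ i ∈ Finset.range j', (1 - y^(m+1+i-j'))) * hexp
      · rw [gb_zero_of_lt y (m+1) (j'+1) (by omega), mul_zero,
          W_zero y (m+1) (j'+1) (by omega)]

section PS
open PowerSeries

lemma Py_eq_prod (m M : ℕ) :
    Py ((X : PowerSeries ℤ)^m) M = ∏ i ∈ Finset.range M, (1 - (X : PowerSeries ℤ)^(m*(i+1))) := by
  unfold Py
  exact Finset.prod_congr rfl (fun i _ => by rw [← pow_mul])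

lemma coeff_strip (A : PowerSeries ℤ) (r e : ℕ) (h : r < e) :
    (coeff (R := ℤ) r) (A * (1 - X^e)) = coeff (R := ℤ) r A := by
  rw [mul_sub, mul_one, map_sub, PowerSeries.coeff_mul_X_pow', if_neg (by omega), sub_zero]

lemma coeff_Py_stab (m : ℕ) (hm : 1 ≤ m) (r M M' : ℕ) (h : r < M) (h' : M ≤ M') :
    (coeff (R := ℤ) r) (Py ((X : PowerSeries ℤ)^m) M') = coeff (R := ℤ) r (Py ((X : PowerSeries ℤ)^m) M) := by
  induction M' with
  | zero => rw [show M = 0 from by omega]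
  | succ M' ih =>
    rcases Nat.lt_or_ge M (M'+1) with h2 | h2
    · rw [Py_succ, ← pow_mul, coeff_strip _ _ _ (by nlinarith), ih (by omega)]
    · rw [show M = M'+1 from by omega]

lemma coeff_fP (m : ℕ) (hm : 1 ≤ m) (n M : ℕ) (h : n < M) :
    (coeff (R := ℤ) n) (f m) = coeff (R := ℤ) n (Py ((X : PowerSeries ℤ)^m) M) := by
  rw [f, coeff_mk, ← Py_eq_prod, coeff_Py_stab m hm n (n+1) M (by omega) (by omega)]

lemma fP_sub_dvd (m : ℕ) (hm : 1 ≤ m) (M : ℕ) :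
    (X : PowerSeries ℤ)^M ∣ f m - Py ((X : PowerSeries ℤ)^m) M := by
  rw [PowerSeries.X_pow_dvd_iff]
  intro r hr
  rw [map_sub, coeff_fP m hm r M hr, sub_self]

lemma coeff_fP_cubed (m : ℕ) (hm : 1 ≤ m) (n N1 N2 N3 : ℕ)
    (h1 : n < N1) (h2 : n < N2) (h3 : n < N3) :
    (coeff (R := ℤ) n) ((f m)^3)
      = coeff (R := ℤ) n (Py ((X : PowerSeries ℤ)^m) N1 *
          (Py ((X : PowerSeries ℤ)^m) N2 * Py ((X : PowerSeries ℤ)^m) N3)) := by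
  set P1 := Py ((X : PowerSeries ℤ)^m) N1
  set P2 := Py ((X : PowerSeries ℤ)^m) N2
  set P3 := Py ((X : PowerSeries ℤ)^m) N3
  have d1 : (X : PowerSeries ℤ)^(n+1) ∣ f m - P1 :=
    dvd_trans (pow_dvd_pow _ (by omega)) (fP_sub_dvd m hm N1)
  have d2 : (X : PowerSeries ℤ)^(n+1) ∣ f m - P2 :=
    dvd_trans (pow_dvd_pow _ (by omega)) (fP_sub_dvd m hm N2)
  have d3 : (X : PowerSeries ℤ)^(n+1) ∣ f m - P3 :=
    dvd_trans (pow_dvd_pow _ (by omega)) (fP_sub_dvd m hm N3)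
  have hsplit : (f m)^3 - P1*(P2*P3)
      = (f m - P1)*(f m * f m) + P1*((f m - P2)*f m) + P1*(P2*(f m - P3)) := by ring
  have hdvd : (X : PowerSeries ℤ)^(n+1) ∣ (f m)^3 - P1*(P2*P3) := by
    rw [hsplit]
    exact dvd_add (dvd_add (d1.mul_right _) ((d2.mul_right _).mul_left _))
      ((d3.mul_left _).mul_left _)
  have := (PowerSeries.X_pow_dvd_iff.mp hdvd) n (by omega)
  rw [map_sub] at this
  omega

lemma prod_one_sub_dvd {x : PowerSeries ℤ} (s : Finset ℕ) (g : ℕ → PowerSeries ℤ)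
    (h : ∀ i ∈ s, x ∣ (g i - 1)) : x ∣ (∏ i ∈ s, g i) - 1 := by
  classical
  induction s using Finset.induction_on with
  | empty => simp
  | insert a s hnot ih =>
    rw [Finset.prod_insert hnot]
    have ha := h a (Finset.mem_insert_self a s)
    have hs := ih (fun i hi => h i (Finset.mem_insert_of_mem hi))
    have : g a * ∏ i ∈ s, g i - 1 = g a * ((∏ i ∈ s, g i) - 1) + (g a - 1) := by ring
    rw [this]
    exact dvd_add (hs.mul_left _) ha

lemma coeff_PygbA (m : ℕ) (hm : 1 ≤ m) (n N j : ℕ) (hN : N = 2*n+2)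
    (hlo : n ≤ j) (hhi : j ≤ 2*N-n) (hj : j ≤ 2*N) :
    (X : PowerSeries ℤ)^(n+1) ∣
      Py ((X : PowerSeries ℤ)^m) (2*N) * gb ((X : PowerSeries ℤ)^m) (2*N) j - 1 := by
  set y : PowerSeries ℤ := (X : PowerSeries ℤ)^m with hy
  have hsplit : Py y (2*N) = Py y j * ∏ i ∈ Finset.range (2*N-j), (1 - y^(j+1+i)) := by
    conv_lhs => rw [Py, show 2*N = j + (2*N-j) from by omega, Finset.prod_range_add]
    congr 1
    exact Finset.prod_congr rfl (fun i _ => by rw [show j+i+1 = j+1+i from by omega])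
  have key : Py y (2*N) * gb y (2*N) j
      = (∏ i ∈ Finset.range j, (1 - y^(2*N+1+i-j))) * ∏ i ∈ Finset.range (2*N-j), (1 - y^(j+1+i)) := by
    rw [hsplit, mul_comm (Py y j), mul_assoc, W_eq y (2*N) j]
    ring
  rw [key]
  have hdvd1 : ∀ E, n+1 ≤ E → (X : PowerSeries ℤ)^(n+1) ∣ ((1 : PowerSeries ℤ) - y^E) - 1 := by
    intro E hE
    rw [sub_sub_cancel_left, hy, ← pow_mul]
    exact (pow_dvd_pow _ (by nlinarith)).neg_right
  have hW : (X : PowerSeries ℤ)^(n+1) ∣ (∏ i ∈ Finset.range j, (1 - y^(2*N+1+i-j))) - 1 :=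
    prod_one_sub_dvd _ _ (fun i _ => hdvd1 _ (by omega))
  have hT : (X : PowerSeries ℤ)^(n+1) ∣ (∏ i ∈ Finset.range (2*N-j), (1 - y^(j+1+i))) - 1 :=
    prod_one_sub_dvd _ _ (fun i _ => hdvd1 _ (by omega))
  have : (∏ i ∈ Finset.range j, (1 - y^(2*N+1+i-j))) * (∏ i ∈ Finset.range (2*N-j), (1 - y^(j+1+i))) - 1
      = (∏ i ∈ Finset.range j, (1 - y^(2*N+1+i-j))) * ((∏ i ∈ Finset.range (2*N-j), (1 - y^(j+1+i))) - 1)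
        + ((∏ i ∈ Finset.range j, (1 - y^(2*N+1+i-j))) - 1) := by ring
  rw [this]
  exact dvd_add (hT.mul_left _) hW

/-- coefficient of a term `X^(n+1) ∣ B - 1` times a power of `y` -/
lemma coeff_term (m : ℕ) (hm : 1 ≤ m) (n e : ℕ) (B : PowerSeries ℤ)
    (hB : (X : PowerSeries ℤ)^(n+1) ∣ B - 1) :
    (coeff (R := ℤ) n) (((X : PowerSeries ℤ)^m)^e * B) = if m * e = n then 1 else 0 := by
  have : ((X : PowerSeries ℤ)^m)^e * B = X^(m*e) + X^(m*e) * (B - 1) := by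
    rw [← pow_mul]; ring
  rw [this, map_add, PowerSeries.coeff_X_pow]
  obtain ⟨u, hu⟩ := hB
  rw [hu, show (X : PowerSeries ℤ)^(m*e) * (X^(n+1) * u) = X^(n+1) * (X^(m*e) * u) from by ring]
  rw [PowerSeries.X_pow_dvd_iff.mp (Dvd.intro _ rfl) n (by omega), add_zero]
  exact if_congr eq_comm rfl rfl

lemma coeff_term_big (m : ℕ) (hm : 1 ≤ m) (n e : ℕ) (he : n < e) (B : PowerSeries ℤ) :
    (coeff (R := ℤ) n) (((X : PowerSeries ℤ)^m)^e * B) = 0 := by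
  rw [← pow_mul]
  have : (X : PowerSeries ℤ)^(n+1) ∣ X^(m*e) * B :=
    ((pow_dvd_pow (X : PowerSeries ℤ) (by nlinarith)).mul_right _)
  exact PowerSeries.X_pow_dvd_iff.mp this n (by omega)

lemma cS_hi (N k : ℕ) : cS N (N+k) = (-1)^k * (k:ℤ) := by
  unfold cS
  rw [show N+(N+k) = k + 2*N from by omega, pow_add, pow_mul]
  push_cast
  ring_nf

lemma cS_lo (N k : ℕ) (h : k+1 ≤ N) : cS N (N-1-k) = (-1)^k * ((k:ℤ)+1) := by
  unfold cS
  rw [show N+(N-1-k) = (k+1) + 2*(N-1-k) from by omega, pow_add, pow_mul]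
  have hc : ((N-1-k : ℕ) : ℤ) = (N:ℤ)-1-k := by omega
  rw [hc]
  ring_nf

def jj (m n : ℕ) : ℤ :=
  ∑ k ∈ Finset.range (n+1), if m * tri k = n then (-1)^k * (2*(k:ℤ)+1) else 0

lemma sum_cS_ind (m n N : ℕ) (hm : 1 ≤ m) (hN : N = 2*n+2) :
    ∑ j ∈ Finset.range (2*N+1), cS N j * (if m * ee N j = n then 1 else 0) = jj m n := by
  have hvanish : ∀ k : ℕ, n < k → (if m * tri k = n then (1:ℤ) else 0) = 0 := by
    intro k hk
    have h1 := le_tri k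
    have h2 : tri k ≤ m * tri k := Nat.le_mul_of_pos_left _ (by omega)
    rw [if_neg (by omega)]
  rw [show 2*N+1 = N + (N+1) from by omega, Finset.sum_range_add]
  have hlo : ∑ j ∈ Finset.range N, cS N j * (if m * ee N j = n then 1 else 0)
      = ∑ k ∈ Finset.range (n+1), (-1)^k * ((k:ℤ)+1) * (if m * tri k = n then 1 else 0) := by
    rw [← Finset.sum_range_reflect]
    rw [Finset.sum_congr rfl (fun k hk => by
      rw [cS_lo N k (by simp at hk; omega), ee_lo N k (by simp at hk; omega)])]
    rw [← Finset.sum_subset (show Finset.range (n+1) ⊆ Finset.range N from by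
      intro x hx; simp at hx ⊢; omega)]
    intro x hx hnx
    simp only [Finset.mem_range] at hx hnx
    rw [hvanish x (by omega), mul_zero]
  have hhi : ∑ k ∈ Finset.range (N+1), cS N (N+k) * (if m * ee N (N+k) = n then 1 else 0)
      = ∑ k ∈ Finset.range (n+1), (-1)^k * (k:ℤ) * (if m * tri k = n then 1 else 0) := by
    rw [Finset.sum_congr rfl (fun k hk => by rw [cS_hi N k, ee_hi N k])]
    rw [← Finset.sum_subset (show Finset.range (n+1) ⊆ Finset.range (N+1) from by
      intro x hx; simp at hx ⊢; omega)]
    intro x hx hnx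
    simp only [Finset.mem_range] at hx hnx
    rw [hvanish x (by omega), mul_zero]
  rw [hlo, hhi, jj, ← Finset.sum_add_distrib]
  refine Finset.sum_congr rfl (fun k _ => ?_)
  by_cases hc : m * tri k = n
  · rw [if_pos hc, if_pos hc]; ring
  · rw [if_neg hc, if_neg hc]; ring

theorem jacobi_cube (m : ℕ) (hm : 1 ≤ m) :
    (f m)^3 = PowerSeries.mk (fun n => jj m n) := by
  ext n
  rw [coeff_mk]
  set y : PowerSeries ℤ := (X : PowerSeries ℤ)^m with hy
  set N : ℕ := 2*n+1+1 with hNdef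
  have h1 : coeff (R := ℤ) n ((f m)^3) = coeff (R := ℤ) n (Py y (2*N) * Sy y N) := by
    rw [show Sy y N = Py y (2*n+1+1) * Py y (2*n+1) from Sy_all y (2*n+1)]
    exact coeff_fP_cubed m hm n (2*N) (2*n+1+1) (2*n+1) (by omega) (by omega) (by omega)
  rw [h1, Sy, Finset.mul_sum, map_sum]
  have hterm : ∀ j ∈ Finset.range (2*N+1),
      coeff (R := ℤ) n (Py y (2*N) * (((cS N j : ℤ) : PowerSeries ℤ) * Aa y N j))
      = cS N j * (if m * ee N j = n then 1 else 0) := by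
    intro j hj
    simp only [Finset.mem_range] at hj
    have hC : ((cS N j : ℤ) : PowerSeries ℤ) = PowerSeries.C (R := ℤ) (cS N j) :=
      (eq_intCast (PowerSeries.C (R := ℤ)) (cS N j)).symm
    rw [hC, show Py y (2*N) * (PowerSeries.C (R := ℤ) (cS N j) * Aa y N j)
        = PowerSeries.C (R := ℤ) (cS N j) * (Py y (2*N) * Aa y N j) from by ring,
      PowerSeries.coeff_C_mul]
    rw [Aa, show Py y (2*N) * (gb y (2*N) j * y^(ee N j))
        = y^(ee N j) * (Py y (2*N) * gb y (2*N) j) from by ring]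
    congr 1
    by_cases hce : ee N j ≤ n
    · have hjlo : n ≤ j := by
        by_cases hjN : j < N
        · have h5 : ee N j = tri (N-j-1) := by rw [ee, if_pos hjN]
          have h6 := le_tri (N-j-1)
          omega
        · omega
      have hjhi : j ≤ 2*N-n := by
        by_cases hjN : j < N
        · omega
        · have h5 : ee N j = tri (j-N) := by rw [ee, if_neg hjN]
          have h6 := le_tri (j-N)
          omega
      exact coeff_term m hm n (ee N j) _
        (coeff_PygbA m hm n N j (by omega) hjlo hjhi (by omega))
    · rw [coeff_term_big m hm n (ee N j) (by omega) _]
      have h2 : ee N j ≤ m * ee N j := Nat.le_mul_of_pos_left _ (by omega)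
      rw [if_neg (by omega)]
  rw [Finset.sum_congr rfl hterm]
  exact sum_cS_ind m n N hm (by omega)

end PS

section Mod7
open PowerSeries

instance : Fact (Nat.Prime 7) := ⟨by norm_num⟩

noncomputable instance : CharP (PowerSeries (ZMod 7)) 7 := by
  constructor
  intro x
  constructor
  · intro h
    have := congrArg (PowerSeries.constantCoeff (R := (ZMod 7))) h
    simpa using (CharP.cast_eq_zero_iff (ZMod 7) 7 x).mp (by simpa using this)
  · intro h
    obtain ⟨c, rfl⟩ := h
    rw [Nat.cast_mul, ← map_natCast (PowerSeries.C (R := (ZMod 7))) 7,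
      show ((7:ℕ) : ZMod 7) = 0 from by decide, map_zero, zero_mul]

noncomputable def pr : PowerSeries ℤ →+* PowerSeries (ZMod 7) :=
  PowerSeries.map (Int.castRingHom (ZMod 7))

lemma frob : (pr (f 1))^7 = pr (f 7) := by
  ext n
  have hdvd : (X : PowerSeries (ZMod 7))^(n+1) ∣ pr (f 1) - pr (Py ((X:PowerSeries ℤ)^1) (n+1)) := by
    have h1 := fP_sub_dvd 1 le_rfl (n+1)
    have h2 := map_dvd (pr) h1
    rw [map_sub] at h2
    rw [show ((X : PowerSeries (ZMod 7))^(n+1)) = pr ((X:PowerSeries ℤ)^(n+1)) from by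
      rw [pr, map_pow, PowerSeries.map_X]]
    exact h2
  have hdvd2 : (X : PowerSeries (ZMod 7))^(n+1) ∣
      (pr (f 1))^7 - (pr (Py ((X:PowerSeries ℤ)^1) (n+1)))^7 :=
    dvd_trans hdvd (sub_dvd_pow_sub_pow _ _ 7)
  have hco : coeff (R := (ZMod 7)) n ((pr (f 1))^7)
      = coeff (R := (ZMod 7)) n ((pr (Py ((X:PowerSeries ℤ)^1) (n+1)))^7) := by
    have := PowerSeries.X_pow_dvd_iff.mp hdvd2 n (by omega)
    rw [map_sub] at this
    exact sub_eq_zero.mp this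
  rw [hco]
  -- now compute the 7th power of the finite product in char 7
  have hmap : pr (Py ((X:PowerSeries ℤ)^1) (n+1))
      = ∏ i ∈ Finset.range (n+1), (1 - (X : PowerSeries (ZMod 7))^(i+1)) := by
    rw [Py_eq_prod, pr, map_prod]
    refine Finset.prod_congr rfl (fun i _ => ?_)
    rw [map_sub, map_one, map_pow, PowerSeries.map_X, one_mul]
  rw [hmap, ← Finset.prod_pow]
  have hfrob : ∀ i : ℕ, ((1 : PowerSeries (ZMod 7)) - X^(i+1))^7 = 1 - X^(7*(i+1)) := by
    intro i
    rw [sub_pow_char, one_pow, ← pow_mul, mul_comm (i+1) 7]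
  rw [Finset.prod_congr rfl (fun i _ => hfrob i)]
  have hmap2 : pr (Py ((X:PowerSeries ℤ)^7) (n+1))
      = ∏ i ∈ Finset.range (n+1), (1 - (X : PowerSeries (ZMod 7))^(7*(i+1))) := by
    rw [Py_eq_prod, pr, map_prod]
    refine Finset.prod_congr rfl (fun i _ => ?_)
    rw [map_sub, map_one, map_pow, PowerSeries.map_X]
  rw [← hmap2, pr, PowerSeries.coeff_map, PowerSeries.coeff_map,
    ← coeff_fP 7 (by omega) n (n+1) (by omega)]

lemma coeff_fP7_zero (r : ℕ) (h : ¬ (7 ∣ r)) : coeff (R := ℤ) r (f 7) = 0 := by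
  have aux : ∀ M r, ¬ (7 ∣ r) →
      coeff (R := ℤ) r (∏ i ∈ Finset.range M, ((1:PowerSeries ℤ) - X^(7*(i+1)))) = 0 := by
    intro M
    induction M with
    | zero =>
      intro r h
      rw [Finset.prod_range_zero, PowerSeries.coeff_one, if_neg (by omega)]
    | succ M ih =>
      intro r h
      rw [Finset.prod_range_succ, mul_sub, mul_one, map_sub, PowerSeries.coeff_mul_X_pow']
      by_cases hle : 7*(M+1) ≤ r
      · rw [if_pos hle, ih r h, ih (r - 7*(M+1)) (by omega), sub_zero]
      · rw [if_neg hle, ih r h, sub_zero]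
  rw [f, coeff_mk]
  exact aux (r+1) r h

lemma coeff_fP7_const : coeff (R := ℤ) 0 (f 7) = 1 := by
  rw [f, coeff_mk, Finset.prod_range_one]
  simp [PowerSeries.coeff_X_pow]

lemma zmod7_key : ∀ x y : ZMod 7, x*x + 2*(y*y) = 0 → x*y = 0 := by decide

lemma arith_term (k l n : ℕ) (h : tri k + 2 * tri l = 7*n+4) :
    ((2*k+1 : ℕ) : ZMod 7) * ((2*l+1 : ℕ) : ZMod 7) = 0 := by
  have h1 : 2 * tri k = k*(k+1) := tri_mul_two k
  have h2 : 2 * tri l = l*(l+1) := tri_mul_two l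
  have hnat : (2*k+1)*(2*k+1) + 2*((2*l+1)*(2*l+1)) = 7*(8*n+5) := by nlinarith
  apply zmod7_key
  have hcast := congrArg (fun t : ℕ => (t : ZMod 7)) hnat
  push_cast at hcast
  push_cast
  rw [hcast, show (7 : ZMod 7) = 0 from by decide, zero_mul]

lemma rhs_zero (n : ℕ) :
    coeff (R := (ZMod 7)) (7*n+4) (pr (PowerSeries.mk (fun r => jj 2 r))
      * pr (PowerSeries.mk (fun r => jj 1 r))) = 0 := by
  rw [PowerSeries.coeff_mul]
  apply Finset.sum_eq_zero
  intro p hp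
  rw [Finset.HasAntidiagonal.mem_antidiagonal] at hp
  rw [pr, PowerSeries.coeff_map, PowerSeries.coeff_map, coeff_mk, coeff_mk]
  simp only [eq_intCast]
  rw [jj, jj, Int.cast_sum, Int.cast_sum, Finset.sum_mul_sum]
  apply Finset.sum_eq_zero
  intro l _
  apply Finset.sum_eq_zero
  intro k _
  by_cases h2 : 2 * tri l = p.1
  · by_cases h1 : 1 * tri k = p.2
    · rw [if_pos h2, if_pos h1]
      have harith := arith_term k l n (by omega)
      push_cast at harith ⊢
      calc ((-1:ZMod 7)^l * (2*(l:ZMod 7)+1)) * ((-1:ZMod 7)^k * (2*(k:ZMod 7)+1))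
          = ((-1:ZMod 7)^l * (-1:ZMod 7)^k) * ((2*(k:ZMod 7)+1) * (2*(l:ZMod 7)+1)) := by ring
        _ = 0 := by rw [harith, mul_zero]
    · rw [if_neg h1]; simp
  · rw [if_neg h2]; simp

/-- reduce a sum over `range (7n+5)` to the arithmetic progression `7s+4`. -/
lemma reduce_sum (F : ℕ → ZMod 7) :
    ∀ n, (∀ k, k ≤ 7*n+4 → ¬ (7 ∣ (7*n+4-k)) → F k = 0) →
    ∑ k ∈ Finset.range (7*n+5), F k = ∑ s ∈ Finset.range (n+1), F (7*s+4) := by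
  intro n
  induction n with
  | zero =>
    intro h
    rw [show 7*0+5 = 5 from rfl, Finset.sum_range_succ, Finset.sum_range_succ,
      Finset.sum_range_succ, Finset.sum_range_succ, Finset.sum_range_one,
      Finset.sum_range_one]
    rw [h 0 (by omega) (by omega), h 1 (by omega) (by omega), h 2 (by omega) (by omega),
      h 3 (by omega) (by omega)]
    norm_num
  | succ n ih =>
    intro h
    have h' : ∀ k, k ≤ 7*n+4 → ¬ (7 ∣ (7*n+4-k)) → F k = 0 := by
      intro k hk hd
      exact h k (by omega) (by
        intro hdvd
        exact hd (by omega))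
    rw [show 7*(n+1)+5 = (7*n+5) + 7 from by omega, Finset.sum_range_add, ih h']
    rw [Finset.sum_range_succ (fun s => F (7*s+4)) (n+1)]
    congr 1
    rw [Finset.sum_range_succ, Finset.sum_range_succ, Finset.sum_range_succ,
      Finset.sum_range_succ, Finset.sum_range_succ, Finset.sum_range_succ,
      Finset.sum_range_one]
    rw [h (7*n+5+0) (by omega) (by omega), h (7*n+5+1) (by omega) (by omega),
      h (7*n+5+2) (by omega) (by omega), h (7*n+5+3) (by omega) (by omega),
      h (7*n+5+4) (by omega) (by omega), h (7*n+5+5) (by omega) (by omega)]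
    rw [show 7*n+5+6 = 7*(n+1)+4 from by omega]
    norm_num

theorem a4_7n4_mod7 (a : Nat -> Int)
    (ha : PowerSeries.mk a * (f 1) ^ (4) = (f 2) ^ (3)) (n : Nat) :
    a (7 * n + 4) % 7 = 0 := by
  have ha7 : PowerSeries.mk a * (f 1)^7 = (f 2)^3 * (f 1)^3 := by
    calc PowerSeries.mk a * (f 1)^7 = (PowerSeries.mk a * (f 1)^4) * (f 1)^3 := by ring
      _ = (f 2)^3 * (f 1)^3 := by rw [ha]
  have hmod : pr (PowerSeries.mk a) * pr (f 7)
      = pr (PowerSeries.mk (fun r => jj 2 r)) * pr (PowerSeries.mk (fun r => jj 1 r)) := by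
    calc pr (PowerSeries.mk a) * pr (f 7)
        = pr (PowerSeries.mk a) * (pr (f 1))^7 := by rw [frob]
      _ = pr (PowerSeries.mk a * (f 1)^7) := by rw [map_mul, map_pow]
      _ = pr ((f 2)^3 * (f 1)^3) := by rw [ha7]
      _ = pr ((f 2)^3) * pr ((f 1)^3) := by rw [map_mul]
      _ = _ := by rw [jacobi_cube 2 (by omega), jacobi_cube 1 (by omega)]
  set g : ℕ → ZMod 7 := fun s => ((a (7*s+4) : ℤ) : ZMod 7) with hg
  set cb : ℕ → ZMod 7 := fun r => ((PowerSeries.coeff (R := ℤ) r (f 7) : ℤ) : ZMod 7) with hcb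
  have hconv : ∀ N : ℕ, ∑ s ∈ Finset.range (N+1), g s * cb (7*(N-s)) = 0 := by
    intro N
    have h0 : PowerSeries.coeff (R := (ZMod 7)) (7*N+4) (pr (PowerSeries.mk a) * pr (f 7)) = 0 := by
      rw [hmod]; exact rhs_zero N
    rw [PowerSeries.coeff_mul, Finset.Nat.sum_antidiagonal_eq_sum_range_succ_mk] at h0
    set F : ℕ → ZMod 7 := fun k => PowerSeries.coeff (R := (ZMod 7)) k (pr (PowerSeries.mk a))
      * PowerSeries.coeff (R := (ZMod 7)) (7*N+4-k) (pr (f 7)) with hF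
    have hvan : ∀ k, k ≤ 7*N+4 → ¬ (7 ∣ (7*N+4-k)) → F k = 0 := by
      intro k hk hd
      rw [hF]
      simp only
      rw [pr, PowerSeries.coeff_map, PowerSeries.coeff_map, coeff_fP7_zero _ hd,
        map_zero, mul_zero]
    have hred := reduce_sum F N hvan
    rw [show (7*N+4).succ = 7*N+5 from rfl, hred] at h0
    rw [← h0]
    apply Finset.sum_congr rfl
    intro s hs
    simp only [Finset.mem_range] at hs
    rw [hF]
    simp only
    rw [pr, PowerSeries.coeff_map, PowerSeries.coeff_map, PowerSeries.coeff_mk,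
      show 7*N+4 - (7*s+4) = 7*(N-s) from by omega, hg, hcb]
    simp only [eq_intCast]
  have hzero : ∀ N, g N = 0 := by
    intro N
    induction N using Nat.strong_induction_on with
    | _ N ih =>
      have h := hconv N
      rw [Finset.sum_range_succ] at h
      have hrest : ∑ s ∈ Finset.range N, g s * cb (7*(N-s)) = 0 :=
        Finset.sum_eq_zero (fun s hs => by rw [ih s (Finset.mem_range.mp hs), zero_mul])
      rw [hrest, zero_add, Nat.sub_self, mul_zero] at h
      have hcb0 : cb 0 = 1 := by rw [hcb]; simp only; rw [coeff_fP7_const]; norm_num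
      rw [hcb0, mul_one] at h
      exact h
  have hfin := hzero n
  rw [hg] at hfin
  simp only at hfin
  have hdvd : ((7:ℕ) : ℤ) ∣ a (7*n+4) := (ZMod.intCast_zmod_eq_zero_iff_dvd _ 7).mp hfin
  obtain ⟨t, ht⟩ := hdvd
  rw [ht]
  push_cast
  exact Int.mul_emod_right 7 t

end Mod7
end

section
/- For all n ≥ 0, a_7(7n+3) ≡ 0 (mod 7), where a_7(n) counts partitions of n with monochromatic even parts and odd parts in one of 7 colors. -/
open PowerSeries Finset

namespace A7

abbrev R7 := ZMod 7
abbrev A := PowerSeries R7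

noncomputable section

/-- triangular numbers -/
def T : ℕ → ℕ
  | 0 => 0
  | n+1 => T n + (n+1)

lemma T_succ (n : ℕ) : T (n+1) = T n + (n+1) := rfl

lemma le_T (n : ℕ) : n ≤ T n := by
  induction n with
  | zero => simp [T]
  | succ n ih => rw [T_succ]; omega

lemma eight_T (n : ℕ) : 8 * T n + 1 = (2*n+1)^2 := by
  induction n with
  | zero => simp [T]
  | succ n ih =>
    have h : (2*(n+1)+1)^2 = (2*n+1)^2 + 8*(n+1) := by ring
    rw [T_succ]; omega

/-- the exponent function -/
def e (n m : ℕ) : ℕ := if n ≤ m then T (m - n) else T (n - m - 1)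

lemma e_E1 (n m : ℕ) : e n m + n = e (n+1) m + m := by
  rcases le_or_gt (n+1) m with h | h
  · rw [e, e, if_pos (by omega), if_pos (by omega)]
    rw [show m - n = (m - (n+1)) + 1 by omega, T_succ]; omega
  · rcases le_or_gt n m with h2 | h2
    · rw [e, e, if_pos h2, if_neg (by omega)]
      rw [show m - n = 0 by omega, show n + 1 - m - 1 = 0 by omega]; omega
    · rw [e, e, if_neg (by omega), if_neg (by omega)]
      rw [show n + 1 - m - 1 = (n - m - 1) + 1 by omega, T_succ]; omega

lemma e_E2 (n m : ℕ) : e (n+1) (m+1) = e n m := by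
  rcases le_or_gt n m with h | h
  · rw [e, e, if_pos (by omega), if_pos h]; congr 1; omega
  · rw [e, e, if_neg (by omega), if_neg (by omega)]; congr 1; omega

lemma e_E3 {n m : ℕ} (h : m ≤ 2*n) : e n m + (n+1) = e (n+1) (m+2) + (2*n - m) := by
  rcases le_or_gt n m with h1 | h1
  · rw [e, e, if_pos h1, if_pos (by omega)]
    rw [show m + 2 - (n+1) = (m - n) + 1 by omega, T_succ]; omega
  · rcases eq_or_lt_of_le (show m + 1 ≤ n by omega) with h2 | h2
    · rw [e, e, if_neg (by omega), if_pos (by omega)]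
      rw [show n - m - 1 = 0 by omega, show m + 2 - (n+1) = 0 by omega]
      have h0 : T 0 = 0 := rfl
      rw [h0]; omega
    · rw [e, e, if_neg (by omega), if_neg (by omega)]
      rw [show n - m - 1 = (n + 1 - (m+2) - 1) + 1 by omega, T_succ]; omega

lemma e_n0 (n : ℕ) : e (n+1) 0 = T n := by
  rw [e, if_neg (by omega)]; congr 1

lemma e_n1 (n : ℕ) : n + 1 + e (n+1) 1 = T n + 1 := by
  cases n with
  | zero =>
    rw [e, if_pos le_rfl, show 1 - 1 = 0 by rfl]
    have h0 : T 0 = 0 := rfl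
    rw [h0]
  | succ p =>
    rw [e, if_neg (by omega), show p + 2 - 1 - 1 = p by omega, T_succ]; omega

lemma e_high (n j : ℕ) : e n (n + j) = T j := by rw [e, if_pos (by omega)]; congr 1; omega

lemma e_low {n j : ℕ} (h : j < n) : e n (n - 1 - j) = T j := by
  rw [e, if_neg (by omega)]; congr 1; omega

/-! ### congruence toolkit -/

def cg (N : ℕ) (x y : A) : Prop := X ^ N ∣ x - y

lemma cg.rfl {N : ℕ} {x : A} : cg N x x := by rw [cg, sub_self]; exact dvd_zero _

lemma cg_of_eq {N : ℕ} {x y : A} (h : x = y) : cg N x y := by simp [cg, h]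

lemma cg.symm {N : ℕ} {x y : A} (h : cg N x y) : cg N y x := by
  rw [cg, show y - x = -(x - y) by ring]
  exact Dvd.dvd.neg_right h

lemma cg.trans {N : ℕ} {x y z : A} (h : cg N x y) (h' : cg N y z) : cg N x z := by
  simpa [cg, sub_add_sub_cancel] using dvd_add h h'

lemma cg.add {N : ℕ} {x y z w : A} (h : cg N x y) (h' : cg N z w) : cg N (x+z) (y+w) := by
  have := dvd_add h h'
  simpa [cg, sub_add_sub_comm] using this

lemma cg.mul {N : ℕ} {x y z w : A} (h : cg N x y) (h' : cg N z w) : cg N (x*z) (y*w) := by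
  have : x*z - y*w = (x - y)*z + y*(z - w) := by ring
  rw [cg, this]
  exact dvd_add (h.mul_right z) (h'.mul_left y)

lemma cg.mono {N N' : ℕ} {x y : A} (hle : N' ≤ N) (h : cg N x y) : cg N' x y :=
  (pow_dvd_pow X hle).trans h

lemma cg.dvd2 {N : ℕ} {x y : A} (h : X^N ∣ x) (h' : X^N ∣ y) : cg N x y :=
  dvd_sub h h'

lemma cg.coeff {N : ℕ} {x y : A} (h : cg N x y) {n : ℕ} (hn : n < N) :
    coeff (R := R7) n x = coeff (R := R7) n y := by
  have := (X_pow_dvd_iff.mp h) n hn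
  rw [map_sub, sub_eq_zero] at this
  exact this

lemma cg_of_coeff {N : ℕ} {x y : A} (h : ∀ n < N, coeff (R := R7) n x = coeff (R := R7) n y) : cg N x y := by
  rw [cg, X_pow_dvd_iff]
  intro m hm
  rw [map_sub, sub_eq_zero]
  exact h m hm

lemma cg.sum {N : ℕ} {ι : Type*} (s : Finset ι) (f g : ι → A)
    (h : ∀ i ∈ s, cg N (f i) (g i)) : cg N (∑ i ∈ s, f i) (∑ i ∈ s, g i) := by
  classical
  induction s using Finset.induction_on with
  | empty => simpa using cg.rfl
  | @insert a s' hx ih =>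
    rw [Finset.sum_insert hx, Finset.sum_insert hx]
    exact (h a (mem_insert_self a s')).add (ih fun i hi => h i (mem_insert_of_mem hi))

lemma cg_prod_one {N : ℕ} {ι : Type*} (s : Finset ι) (d : ι → ℕ)
    (hd : ∀ i ∈ s, N ≤ d i) : cg N (∏ i ∈ s, (1 - X^(d i))) 1 := by
  classical
  induction s using Finset.induction_on with
  | empty => simpa using cg.rfl
  | @insert a s' hx ih =>
    rw [Finset.prod_insert hx]
    have h1 : cg N (1 - X^(d a)) 1 := by
      rw [cg]
      simpa using (pow_dvd_pow X (hd a (mem_insert_self a s'))).neg_right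
    have h2 := ih fun i hi => hd i (mem_insert_of_mem hi)
    simpa using h1.mul h2

/-! ### Gaussian binomials -/

def gb : ℕ → ℕ → A
  | _, 0 => 1
  | 0, _+1 => 0
  | n+1, k+1 => gb n k + X^(k+1) * gb n (k+1)

@[simp] lemma gb_zero_right (n : ℕ) : gb n 0 = 1 := by cases n <;> rfl

@[simp] lemma gb_zero_succ (k : ℕ) : gb 0 (k+1) = 0 := rfl

lemma gb_succ_succ (n k : ℕ) : gb (n+1) (k+1) = gb n k + X^(k+1) * gb n (k+1) := rfl

lemma gb_eq_zero : ∀ {n k : ℕ}, n < k → gb n k = 0 := by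
  intro n
  induction n with
  | zero => intro k hk; cases k with | zero => omega | succ k => rfl
  | succ n ih =>
    intro k hk
    cases k with
    | zero => omega
    | succ k => rw [gb_succ_succ, ih (by omega), ih (by omega)]; simp

@[simp] lemma gb_diag (n : ℕ) : gb n n = 1 := by
  induction n with
  | zero => rfl
  | succ n ih => rw [gb_succ_succ, ih, gb_eq_zero (by omega)]; simp

lemma geom (n : ℕ) : 1 + X * ∑ i ∈ range n, (X:A)^i = X^n + ∑ i ∈ range n, (X:A)^i := by
  rw [Finset.mul_sum]
  have h1 : ∀ i, (X:A) * X^i = X^(i+1) := fun i => (pow_succ' X i).symm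
  simp only [h1]
  have h2 := Finset.sum_range_succ (fun i => (X:A)^i) n
  have h3 := Finset.sum_range_succ' (fun i => (X:A)^i) n
  linear_combination h3.symm.trans h2

lemma gb_one (n : ℕ) : gb n 1 = ∑ i ∈ range n, X^i := by
  induction n with
  | zero => simp [gb]
  | succ n ih =>
    rw [gb_succ_succ, ih, gb_zero_right]
    have := geom n
    have h2 := Finset.sum_range_succ (fun i => (X:A)^i) n
    rw [h2]
    linear_combination this

lemma gb_one_step2 (n : ℕ) : gb (n+2) 1 = 1 + X^(n+1) + X * gb n 1 := by
  rw [gb_one, gb_one]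
  have h2 := Finset.sum_range_succ (fun i => (X:A)^i) (n+1)
  have h3 := Finset.sum_range_succ (fun i => (X:A)^i) n
  rw [h2, h3]
  have := geom n
  linear_combination -this

/-- second Pascal identity, subtraction-free form -/
lemma gb_pascal2 : ∀ n k d : ℕ, k + d = n → gb (n+1) (k+1) = X^d * gb n k + gb n (k+1) := by
  intro n
  induction n with
  | zero =>
    intro k d h
    have hk : k = 0 := by omega
    have hd : d = 0 := by omega
    subst hk; subst hd
    rw [gb_succ_succ]; simp
  | succ n ih =>
    intro k d h
    cases k with
    | zero =>
      have hd : d = n + 1 := by omega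
      subst hd
      rw [gb_succ_succ, gb_one]
      simp only [gb_zero_right]
      have h2 := Finset.sum_range_succ (fun i => (X:A)^i) n
      rw [h2]
      have := geom n
      linear_combination this
    | succ j =>
      cases d with
      | zero =>
        have hj : j + 1 = n + 1 := by omega
        rw [hj]
        rw [gb_eq_zero (show n+1 < n+2 by omega), gb_diag]
        simp
      | succ d' =>
        have h1 : j + (d' + 1) = n := by omega
        have h2 : (j + 1) + d' = n := by omega
        have hA := gb_succ_succ (n+1) (j+1)
        have hB := ih j (d'+1) h1
        have hC := ih (j+1) d' h2
        have hD := gb_succ_succ n j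
        have hE := gb_succ_succ n (j+1)
        linear_combination hA + hB + X^(j+2) * hC - X^(d'+1) * hD - hE

/-- symmetry -/
lemma gb_symm : ∀ n k d : ℕ, k + d = n → gb n k = gb n d := by
  intro n
  induction n with
  | zero => intro k d h; have h2 : k = 0 ∧ d = 0 := by omega
            rw [h2.1, h2.2]
  | succ n ih =>
    intro k d h
    cases k with
    | zero =>
      have h2 : d = n+1 := by omega
      rw [h2]; simp
    | succ j =>
      cases d with
      | zero => have h2 : j + 1 = n + 1 := by omega
                rw [h2]; simp
      | succ d' =>
        have hA := gb_succ_succ n j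
        have hB := gb_succ_succ n d'
        have hI1 := ih j (d'+1) (by omega)
        have hI2 := ih (j+1) d' (by omega)
        have hP := gb_pascal2 n d' (j+1) (by omega)
        linear_combination hA + hI1 + X^(j+1)*hI2 - hP

/-! ### Part 2 : product formula and the Z/R induction -/

/-- gb double-step recurrence -/
lemma gb2 {n m : ℕ} (hm : m ≤ 2*n) :
    gb (2*n+2) (m+2) = X^(m+2) * gb (2*n) (m+2) + (1+X^(2*n+1)) * gb (2*n) (m+1)
      + X^(2*n-m) * gb (2*n) m := by
  have hA : gb (2*n+2) (m+2) = gb (2*n+1) (m+1) + X^(m+2) * gb (2*n+1) (m+2) :=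
    gb_succ_succ (2*n+1) (m+1)
  have hB : gb (2*n+1) (m+1) = X^(2*n-m) * gb (2*n) m + gb (2*n) (m+1) :=
    gb_pascal2 (2*n) m (2*n-m) (by omega)
  rcases Nat.lt_or_ge m (2*n) with h | h
  · have hC : gb (2*n+1) (m+2) = X^(2*n-m-1) * gb (2*n) (m+1) + gb (2*n) (m+2) :=
      gb_pascal2 (2*n) (m+1) (2*n-m-1) (by omega)
    have hx : (X:A)^(m+2) * X^(2*n-m-1) = X^(2*n+1) := by
      rw [← pow_add]; congr 1; omega
    rw [hA, hB, hC]
    linear_combination (gb (2*n) (m+1)) * hx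
  · have hm2n : m = 2*n := by omega
    subst hm2n
    rw [hA, hB]
    rw [gb_eq_zero (show 2*n+1 < 2*n+2 by omega), gb_eq_zero (show 2*n < 2*n+1 by omega),
        gb_eq_zero (show 2*n < 2*n+2 by omega)]
    simp

def U1 (s : ℕ) : A := ∏ i ∈ range s, (1 - X^(i+1))
def Vb (a b : ℕ) : A := ∏ i ∈ range a, (1 - X^(b+i+1))

lemma U1_succ (s : ℕ) : U1 (s+1) = U1 s * (1 - X^(s+1)) := Finset.prod_range_succ _ _

/-- product formula -/
lemma PF : ∀ b a : ℕ, gb (a+b) a * U1 a = Vb a b := by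
  intro b
  induction b with
  | zero =>
    intro a
    rw [Nat.add_zero, gb_diag, one_mul, U1, Vb]
    exact Finset.prod_congr rfl (fun i _ => by rw [Nat.zero_add])
  | succ b ih =>
    intro a
    induction a with
    | zero => simp [U1, Vb]
    | succ a iha =>
      have hA : gb (a+1+(b+1)) (a+1) = gb (a+b+1) a + X^(a+1) * gb (a+b+1) (a+1) := by
        rw [show a+1+(b+1) = (a+b+1)+1 by omega]
        exact gb_succ_succ (a+b+1) a
      have h1 : gb (a+(b+1)) a * U1 a = Vb a (b+1) := iha
      have h1' : gb (a+b+1) a * U1 a = Vb a (b+1) := by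
        rw [show a+b+1 = a+(b+1) by omega]; exact h1
      have h2 : gb (a+1+b) (a+1) * U1 (a+1) = Vb (a+1) b := ih (a+1)
      have h2' : gb (a+b+1) (a+1) * U1 (a+1) = Vb (a+1) b := by
        rw [show a+b+1 = a+1+b by omega]; exact h2
      have hVA : Vb (a+1) b = (1 - X^(b+1)) * Vb a (b+1) := by
        rw [Vb, Finset.prod_range_succ' (fun i => 1 - (X:A)^(b+i+1)) a]
        have hre : (∏ i ∈ range a, (1 - (X:A)^(b+(i+1)+1))) = Vb a (b+1) :=
          Finset.prod_congr rfl (fun i _ => by rw [show b+(i+1)+1 = b+1+i+1 by omega])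
        rw [hre]
        ring
      have hVB : Vb (a+1) (b+1) = Vb a (b+1) * (1 - X^(a+b+2)) := by
        rw [Vb, Finset.prod_range_succ]
        rw [Vb, show b+1+a+1 = a+b+2 by omega]
      have hU : U1 (a+1) = U1 a * (1 - X^(a+1)) := U1_succ a
      have hx : (X:A)^(a+1) * X^(b+1) = X^(a+b+2) := by rw [← pow_add]; congr 1; omega
      rw [hA, hU, hVB]
      calc (gb (a+b+1) a + X^(a+1) * gb (a+b+1) (a+1)) * (U1 a * (1 - X^(a+1)))
          = (gb (a+b+1) a * U1 a) * (1 - X^(a+1))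
            + X^(a+1) * (gb (a+b+1) (a+1) * (U1 a * (1 - X^(a+1)))) := by ring
        _ = Vb a (b+1) * (1 - X^(a+1)) + X^(a+1) * Vb (a+1) b := by rw [h1', ← hU, h2']
        _ = Vb a (b+1) * (1 - X^(a+1)) + X^(a+1) * ((1 - X^(b+1)) * Vb a (b+1)) := by rw [hVA]
        _ = Vb a (b+1) * (1 - X^(a+b+2)) := by linear_combination (Vb a (b+1)) * hx

/-! ### the two key sums -/

def gz (n m : ℕ) : A := (-1)^m * gb (2*n) m * X^(e n m)
def rz (n m : ℕ) : A := (-1)^(m+1) * (m:A) * gb (2*n) m * X^(e n m)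

def Zs (n : ℕ) : A := ∑ m ∈ range (2*n+1), gz n m
def Rs (n : ℕ) : A := ∑ m ∈ range (2*n+1), rz n m

lemma gz_hi {n m : ℕ} (h : 2*n < m) : gz n m = 0 := by
  rw [gz, gb_eq_zero h]; ring
lemma rz_hi {n m : ℕ} (h : 2*n < m) : rz n m = 0 := by
  rw [rz, gb_eq_zero h]; ring

lemma shift1 (G : ℕ → A) (N : ℕ) (h1 : G (N+1) = 0) :
    ∑ m ∈ range (N+1), G (m+1) = ∑ m ∈ range (N+1), G m - G 0 := by
  have a1 := Finset.sum_range_succ' G (N+1)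
  have a2 := Finset.sum_range_succ G (N+1)
  rw [h1, add_zero] at a2
  linear_combination a2 - a1

lemma shift2 (G : ℕ → A) (N : ℕ) (h1 : G (N+1) = 0) (h2 : G (N+2) = 0) :
    ∑ m ∈ range (N+1), G (m+2) = ∑ m ∈ range (N+1), G m - G 0 - G 1 := by
  have b1 := shift1 (fun m => G (m+1)) N (by simpa using h2)
  have b2 := shift1 G N h1
  linear_combination b1 + b2

lemma split3 (G : ℕ → A) (n : ℕ) :
    ∑ m ∈ range (2*n+3), G m = ∑ m ∈ range (2*n+1), G (m+2) + G 1 + G 0 := by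
  rw [Finset.sum_range_succ' G (2*n+2), Finset.sum_range_succ' (fun m => G (m+1)) (2*n+1)]

/-- per-term step identity, Z version -/
lemma gz_step {n m : ℕ} (hm : m ≤ 2*n) :
    gz (n+1) (m+2) = X^n * gz n (m+2) - (1+X^(2*n+1)) * gz n (m+1) + X^(n+1) * gz n m := by
  have hx1 : (X:A)^(m+2) * X^(e (n+1) (m+2)) = X^n * X^(e n (m+2)) := by
    rw [← pow_add, ← pow_add]; congr 1; have := e_E1 n (m+2); omega
  have hx2 : (X:A)^(e (n+1) (m+2)) = X^(e n (m+1)) := by rw [e_E2]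
  have hx3 : (X:A)^(2*n-m) * X^(e (n+1) (m+2)) = X^(n+1) * X^(e n m) := by
    rw [← pow_add, ← pow_add]; congr 1; have := e_E3 hm; omega
  rw [gz, gz, gz, gz, show 2*(n+1) = 2*n+2 by ring, gb2 hm]
  linear_combination ((-1):A)^(m+2) * gb (2*n) (m+2) * hx1
    + ((-1):A)^(m+2) * (1+X^(2*n+1)) * gb (2*n) (m+1) * hx2
    + ((-1):A)^(m+2) * gb (2*n) m * hx3

/-- per-term step identity, R version -/
lemma rz_step {n m : ℕ} (hm : m ≤ 2*n) :
    rz (n+1) (m+2) = X^n * rz n (m+2) + (1+X^(2*n+1)) * (gz n (m+1) - rz n (m+1))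
      + X^(n+1) * (rz n m - 2 * gz n m) := by
  have hx1 : (X:A)^(m+2) * X^(e (n+1) (m+2)) = X^n * X^(e n (m+2)) := by
    rw [← pow_add, ← pow_add]; congr 1; have := e_E1 n (m+2); omega
  have hx2 : (X:A)^(e (n+1) (m+2)) = X^(e n (m+1)) := by rw [e_E2]
  have hx3 : (X:A)^(2*n-m) * X^(e (n+1) (m+2)) = X^(n+1) * X^(e n m) := by
    rw [← pow_add, ← pow_add]; congr 1; have := e_E3 hm; omega
  rw [rz, rz, rz, rz, gz, gz, show 2*(n+1) = 2*n+2 by ring, gb2 hm]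
  push_cast
  linear_combination ((-1):A)^(m+2+1) * ((m:A)+2) * gb (2*n) (m+2) * hx1
    + ((-1):A)^(m+2+1) * ((m:A)+2) * (1+X^(2*n+1)) * gb (2*n) (m+1) * hx2
    + ((-1):A)^(m+2+1) * ((m:A)+2) * gb (2*n) m * hx3

/-! ### Z/R induction -/

lemma ZRbase : Zs 1 = 0 ∧ Rs 1 = (-1)^(1+1) * U1 1 * U1 0 := by
  constructor <;>
  · simp [Zs, Rs, gz, rz, e, T, Finset.sum_range_succ, gb_succ_succ, U1,
      Finset.prod_range_succ]
    try ring

lemma ZRstep (p : ℕ) (hZ : Zs (p+1) = 0)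
    (hR : Rs (p+1) = (-1)^(p+2) * U1 (p+1) * U1 p) :
    Zs (p+2) = 0 ∧ Rs (p+2) = (-1)^(p+3) * U1 (p+2) * U1 (p+1) := by
  have hsplitZ : Zs (p+2) = ∑ m ∈ range (2*(p+1)+1), gz (p+2) (m+2) + gz (p+2) 1 + gz (p+2) 0 := by
    rw [Zs, show 2*(p+2)+1 = 2*(p+1)+3 by ring]
    exact split3 _ (p+1)
  have hsplitR : Rs (p+2) = ∑ m ∈ range (2*(p+1)+1), rz (p+2) (m+2) + rz (p+2) 1 + rz (p+2) 0 := by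
    rw [Rs, show 2*(p+2)+1 = 2*(p+1)+3 by ring]
    exact split3 _ (p+1)
  have hzsum2 : ∑ m ∈ range (2*(p+1)+1), gz (p+1) (m+2)
      = Zs (p+1) - gz (p+1) 0 - gz (p+1) 1 :=
    shift2 (gz (p+1)) (2*(p+1)) (gz_hi (by omega)) (gz_hi (by omega))
  have hzsum1 : ∑ m ∈ range (2*(p+1)+1), gz (p+1) (m+1) = Zs (p+1) - gz (p+1) 0 :=
    shift1 (gz (p+1)) (2*(p+1)) (gz_hi (by omega))
  have hrsum2 : ∑ m ∈ range (2*(p+1)+1), rz (p+1) (m+2)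
      = Rs (p+1) - rz (p+1) 0 - rz (p+1) 1 :=
    shift2 (rz (p+1)) (2*(p+1)) (rz_hi (by omega)) (rz_hi (by omega))
  have hrsum1 : ∑ m ∈ range (2*(p+1)+1), rz (p+1) (m+1) = Rs (p+1) - rz (p+1) 0 :=
    shift1 (rz (p+1)) (2*(p+1)) (rz_hi (by omega))
  have hstepZ : ∑ m ∈ range (2*(p+1)+1), gz (p+2) (m+2)
      = X^(p+1) * (Zs (p+1) - gz (p+1) 0 - gz (p+1) 1)
        - (1+X^(2*(p+1)+1)) * (Zs (p+1) - gz (p+1) 0)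
        + X^(p+2) * Zs (p+1) := by
    calc ∑ m ∈ range (2*(p+1)+1), gz (p+2) (m+2)
        = ∑ m ∈ range (2*(p+1)+1), (X^(p+1) * gz (p+1) (m+2)
            - (1+X^(2*(p+1)+1)) * gz (p+1) (m+1) + X^(p+2) * gz (p+1) m) :=
          Finset.sum_congr rfl (fun m hm => by
            have hm' : m ≤ 2*(p+1) := by have := mem_range.mp hm; omega
            exact gz_step hm')
      _ = X^(p+1) * (∑ m ∈ range (2*(p+1)+1), gz (p+1) (m+2))
            - (1+X^(2*(p+1)+1)) * (∑ m ∈ range (2*(p+1)+1), gz (p+1) (m+1))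
            + X^(p+2) * (∑ m ∈ range (2*(p+1)+1), gz (p+1) m) := by
          rw [Finset.sum_add_distrib, Finset.sum_sub_distrib]
          simp only [← Finset.mul_sum]
      _ = _ := by rw [hzsum2, hzsum1]; rfl
  have hstepR : ∑ m ∈ range (2*(p+1)+1), rz (p+2) (m+2)
      = X^(p+1) * (Rs (p+1) - rz (p+1) 0 - rz (p+1) 1)
        + (1+X^(2*(p+1)+1)) * ((Zs (p+1) - gz (p+1) 0) - (Rs (p+1) - rz (p+1) 0))
        + X^(p+2) * (Rs (p+1) - 2 * Zs (p+1)) := by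
    calc ∑ m ∈ range (2*(p+1)+1), rz (p+2) (m+2)
        = ∑ m ∈ range (2*(p+1)+1), (X^(p+1) * rz (p+1) (m+2)
            + (1+X^(2*(p+1)+1)) * (gz (p+1) (m+1) - rz (p+1) (m+1))
            + X^(p+2) * (rz (p+1) m - 2 * gz (p+1) m)) :=
          Finset.sum_congr rfl (fun m hm => by
            have hm' : m ≤ 2*(p+1) := by have := mem_range.mp hm; omega
            exact rz_step hm')
      _ = X^(p+1) * (∑ m ∈ range (2*(p+1)+1), rz (p+1) (m+2))
            + (1+X^(2*(p+1)+1)) * ((∑ m ∈ range (2*(p+1)+1), gz (p+1) (m+1))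
                - (∑ m ∈ range (2*(p+1)+1), rz (p+1) (m+1)))
            + X^(p+2) * ((∑ m ∈ range (2*(p+1)+1), rz (p+1) m)
                - 2 * (∑ m ∈ range (2*(p+1)+1), gz (p+1) m)) := by
          rw [Finset.sum_add_distrib, Finset.sum_add_distrib]
          simp only [← Finset.mul_sum]
          rw [Finset.sum_sub_distrib, Finset.sum_sub_distrib]
          simp only [← Finset.mul_sum]
      _ = _ := by rw [hrsum2, hrsum1, hzsum1]; rfl
  have hg0 : gz (p+1) 0 = X^(T p) := by
    simp [gz, e_n0]
  have hg1 : X^(p+1) * gz (p+1) 1 = -(gb (2*(p+1)) 1 * (X^(T p) * X)) := by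
    rw [gz]
    have hx : (X:A)^(p+1) * X^(e (p+1) 1) = X^(T p) * X := by
      rw [← pow_add, ← pow_succ]
      congr 1
      have := e_n1 p; omega
    linear_combination (-(gb (2*(p+1)) 1)) * hx
  have hrz0 : rz (p+1) 0 = 0 := by simp [rz]
  have hrz1 : X^(p+1) * rz (p+1) 1 = gb (2*(p+1)) 1 * (X^(T p) * X) := by
    rw [rz]
    have hx : (X:A)^(p+1) * X^(e (p+1) 1) = X^(T p) * X := by
      rw [← pow_add, ← pow_succ]
      congr 1
      have := e_n1 p; omega
    push_cast
    linear_combination (gb (2*(p+1)) 1) * hx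
  have he21 : e (p+2) 1 = T p := by
    have h1 : p + 2 + e (p+2) 1 = T (p+1) + 1 := e_n1 (p+1)
    have h2 := T_succ p; omega
  have hG0 : gz (p+2) 0 = X^(T p) * X^(p+1) := by
    rw [gz, e_n0, T_succ, pow_add]
    simp
  have hG1 : gz (p+2) 1 = -((1 + X^(2*(p+1)+1) + X * gb (2*(p+1)) 1) * X^(T p)) := by
    rw [gz, he21, show 2*(p+2) = 2*(p+1)+2 by ring, gb_one_step2]
    ring
  have hRZ0 : rz (p+2) 0 = 0 := by simp [rz]
  have hRZ1 : rz (p+2) 1 = (1 + X^(2*(p+1)+1) + X * gb (2*(p+1)) 1) * X^(T p) := by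
    rw [rz, he21, show 2*(p+2) = 2*(p+1)+2 by ring, gb_one_step2]
    push_cast
    ring
  constructor
  · rw [hsplitZ, hstepZ, hZ, hg0, hG0, hG1]
    linear_combination -hg1
  · have hU2 : U1 (p+2) = U1 (p+1) * (1 - X^(p+2)) := U1_succ (p+1)
    have hU1 : U1 (p+1) = U1 p * (1 - X^(p+1)) := U1_succ p
    rw [hsplitR, hstepR, hZ, hR, hg0, hrz0, hRZ0, hRZ1, hU2, hU1]
    linear_combination -hrz1

theorem ZR (n : ℕ) (h : 1 ≤ n) : Zs n = 0 ∧ Rs n = (-1)^(n+1) * U1 n * U1 (n-1) := by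
  induction n with
  | zero => omega
  | succ n ih =>
    cases n with
    | zero => exact ZRbase
    | succ p =>
      obtain ⟨hZ, hR⟩ := ih (by omega)
      have hR' : Rs (p+1) = (-1)^(p+2) * U1 (p+1) * U1 p := by
        rw [hR]; norm_num
      exact ZRstep p hZ hR'


/-! ### Part 3 : Jacobi assembly -/

lemma cg.sub {N : ℕ} {x y z w : A} (h : cg N x y) (h' : cg N z w) : cg N (x-z) (y-w) := by
  have hd := dvd_sub (α := A) h h'
  rw [cg, show x - z - (y - w) = x - y - (z - w) by ring]
  exact hd

lemma cg_Xmul {N : ℕ} (t : ℕ) {x y : A} (h : cg N x y) : cg (t+N) (X^t * x) (X^t * y) := by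
  rw [cg, show X^t*x - X^t*y = X^t*(x-y) by ring, pow_add]
  exact mul_dvd_mul_left _ h

def P (m s : ℕ) : A := ∏ i ∈ range s, (1 - X^(m*(i+1)))

lemma P1_eq_U1 (s : ℕ) : P 1 s = U1 s := by
  rw [P, U1]; exact Finset.prod_congr rfl fun i _ => by rw [one_mul]

lemma cgP {m : ℕ} (hm : 1 ≤ m) {s s' : ℕ} (h : s ≤ s') : cg (s+1) (P m s) (P m s') := by
  have hsplit : P m s' = P m s * ∏ i ∈ Ico s s', (1 - X^(m*(i+1))) := by
    rw [P, P]
    simp only [range_eq_Ico]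
    exact (Finset.prod_Ico_consecutive _ (Nat.zero_le s) h).symm
  have h2 : cg (s+1) (∏ i ∈ Ico s s', (1 - X^(m*(i+1)))) 1 :=
    cg_prod_one _ _ (fun i hi => by
      have h3 := (Finset.mem_Ico.mp hi).1
      have h4 : (i+1) ≤ m*(i+1) := Nat.le_mul_of_pos_left (i+1) hm
      omega)
  have h3 : cg (s+1) (P m s * (∏ i ∈ Ico s s', (1 - X^(m*(i+1))))) (P m s * 1) :=
    cg.rfl.mul h2
  exact ((cg_of_eq hsplit).trans (h3.trans (cg_of_eq (mul_one _)))).symm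

def ρ : ℤ →+* R7 := Int.castRingHom R7

def fser (m : ℕ) : PowerSeries ℤ :=
  PowerSeries.mk fun n =>
    PowerSeries.coeff (R := ℤ) n (Finset.prod (Finset.range (n + 1)) fun i => (1 - PowerSeries.X ^ (m * (i + 1))))

def Fm (m : ℕ) : A := PowerSeries.map ρ (fser m)

lemma map_prod_P (m s : ℕ) :
    PowerSeries.map ρ (∏ i ∈ range s, (1 - (PowerSeries.X : PowerSeries ℤ)^(m*(i+1)))) = P m s := by
  rw [map_prod, P]
  exact Finset.prod_congr rfl fun i _ => by
    rw [map_sub, map_one, map_pow, PowerSeries.map_X]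

lemma coeff_F (m n : ℕ) : coeff (R := R7) n (Fm m) = coeff (R := R7) n (P m (n+1)) := by
  rw [Fm, PowerSeries.coeff_map, fser, PowerSeries.coeff_mk, ← map_prod_P m (n+1),
    PowerSeries.coeff_map]

lemma cgF {m : ℕ} (hm : 1 ≤ m) (N : ℕ) : cg (N+1) (Fm m) (P m N) := by
  apply cg_of_coeff
  intro n hn
  rw [coeff_F]
  rcases le_or_gt (n+1) N with h | h
  · exact (cgP hm h).coeff (by omega)
  · exact ((cgP hm (show N ≤ n+1 by omega)).coeff (show n < N+1 by omega)).symm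

/-! ### the theta side -/

def sc (j : ℕ) : R7 := (-1)^j * ((2*j+1 : ℕ) : R7)
def jc (c : ℕ) : R7 := ∑ j ∈ range (c+1), if T j = c then sc j else 0
def J : A := PowerSeries.mk jc
def Jpart (n : ℕ) : A := ∑ j ∈ range (n+1), PowerSeries.C (R := R7) (sc j) * X^(T j)

lemma coeff_Jpart {c n : ℕ} (hcn : c ≤ n) : coeff (R := R7) c (Jpart n) = jc c := by
  rw [Jpart, map_sum]
  have h1 : ∀ j, coeff (R := R7) c (PowerSeries.C (R := R7) (sc j) * X^(T j))
      = if T j = c then sc j else 0 := fun j => by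
    rw [PowerSeries.coeff_C_mul, PowerSeries.coeff_X_pow, mul_ite, mul_one, mul_zero]
    exact if_congr eq_comm rfl rfl
  simp only [h1]
  rw [jc]
  symm
  apply Finset.sum_subset (Finset.range_subset_range.mpr (by omega))
  intro j hj hnot
  have h2 : c + 1 ≤ j := by
    by_contra hc
    exact hnot (Finset.mem_range.mpr (by omega))
  have h3 := le_T j
  rw [if_neg (by omega)]

def hterm (n m : ℕ) : A := (-1)^(n+m) * (m:A) * gb (2*n) m * (X^(e n m) * U1 n)

lemma hexp (n : ℕ) : (-1)^(n+1) * U1 n * Rs n = ∑ m ∈ range (2*n+1), hterm n m := by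
  rw [Rs, Finset.mul_sum]
  exact Finset.sum_congr rfl fun m _ => by rw [rz, hterm]; ring

lemma hsplit (n : ℕ) : ∑ m ∈ range (2*n+1), hterm n m
    = (∑ j ∈ range n, (hterm n (n+j) + hterm n (n-1-j))) + hterm n (2*n) := by
  have h1 : ∑ m ∈ range (2*n+1), hterm n m
      = ∑ m ∈ Ico 0 n, hterm n m + ∑ m ∈ Ico n (2*n+1), hterm n m := by
    rw [Finset.sum_Ico_consecutive _ (Nat.zero_le n) (by omega), ← range_eq_Ico]
  have h2 : ∑ m ∈ Ico n (2*n+1), hterm n m = ∑ j ∈ range (n+1), hterm n (n+j) := by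
    rw [Finset.sum_Ico_eq_sum_range, show 2*n+1-n = n+1 by omega]
  have h3 : ∑ m ∈ Ico 0 n, hterm n m = ∑ j ∈ range n, hterm n (n-1-j) := by
    rw [← range_eq_Ico]
    exact (Finset.sum_range_reflect (fun m => hterm n m) n).symm
  rw [h1, h2, h3, Finset.sum_range_succ, Finset.sum_add_distrib,
    show n + n = 2*n by omega]
  abel

lemma tail_dvd {n M : ℕ} (hM : M + 1 ≤ n) : (X:A)^(M+1) ∣ hterm n (2*n) := by
  have he : e n (2*n) = T n := by
    rw [show 2*n = n + n by ring, e_high]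
  have h1 : (X:A)^(M+1) ∣ X^(e n (2*n)) := by
    rw [he]
    exact pow_dvd_pow _ (by have := le_T n; omega)
  rw [hterm]
  exact Dvd.dvd.mul_left (Dvd.dvd.mul_right h1 (U1 n)) _

lemma pair_j {n j M : ℕ} (hj : j < n) (hn : M + 1 ≤ n) :
    cg (M+1) (hterm n (n+j) + hterm n (n-1-j)) (PowerSeries.C (R := R7) (sc j) * X^(T j)) := by
  by_cases hT : T j ≤ M
  · -- main case
    have hjM : j ≤ M := le_trans (le_T j) hT
    have hTj := le_T j
    have c1 : cg (n-j) (gb (2*n) (n+j) * U1 n) 1 := by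
      have hsym : gb (2*n) (n+j) = gb (2*n) (n-j) :=
        (gb_symm (2*n) (n-j) (n+j) (by omega)).symm
      have hPF : gb (2*n) (n-j) * U1 (n-j) = Vb (n-j) (n+j) := by
        have h := PF (n+j) (n-j)
        rw [show (n-j)+(n+j) = 2*n by omega] at h
        exact h
      have hUsplit : U1 n = U1 (n-j) * ∏ i ∈ Ico (n-j) n, (1 - X^(i+1)) := by
        rw [U1, U1]
        simp only [range_eq_Ico]
        exact (Finset.prod_Ico_consecutive _ (Nat.zero_le _) (show n-j ≤ n by omega)).symm
      rw [hsym, hUsplit, ← mul_assoc, hPF]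
      have hV : cg (n-j) (Vb (n-j) (n+j)) 1 := by
        rw [Vb]
        exact cg_prod_one _ _ (fun i _ => by omega)
      have hW : cg (n-j) (∏ i ∈ Ico (n-j) n, (1 - X^(i+1))) 1 :=
        cg_prod_one _ _ (fun i hi => by have := (Finset.mem_Ico.mp hi).1; omega)
      simpa using hV.mul hW
    have c2 : cg (n-j) (gb (2*n) (n-1-j) * U1 n) 1 := by
      have hPF : gb (2*n) (n-1-j) * U1 (n-1-j) = Vb (n-1-j) (n+1+j) := by
        have h := PF (n+1+j) (n-1-j)
        rw [show (n-1-j)+(n+1+j) = 2*n by omega] at h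
        exact h
      have hUsplit : U1 n = U1 (n-1-j) * ∏ i ∈ Ico (n-1-j) n, (1 - X^(i+1)) := by
        rw [U1, U1]
        simp only [range_eq_Ico]
        exact (Finset.prod_Ico_consecutive _ (Nat.zero_le _) (show n-1-j ≤ n by omega)).symm
      rw [hUsplit, ← mul_assoc, hPF]
      have hV : cg (n-j) (Vb (n-1-j) (n+1+j)) 1 := by
        rw [Vb]
        exact cg_prod_one _ _ (fun i _ => by omega)
      have hW : cg (n-j) (∏ i ∈ Ico (n-1-j) n, (1 - X^(i+1))) 1 :=
        cg_prod_one _ _ (fun i hi => by have := (Finset.mem_Ico.mp hi).1; omega)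
      simpa using hV.mul hW
    have hsign1 : hterm n (n+j)
        = (-1)^j * (((n+j:ℕ):A) * (X^(T j) * (gb (2*n) (n+j) * U1 n))) := by
      rw [hterm, e_high]
      have hs : ((-1):A)^(n+(n+j)) = (-1)^j := by
        rw [show n+(n+j) = 2*n+j by omega, pow_add, pow_mul]
        norm_num
      rw [hs]; ring
    have hsign2 : hterm n (n-1-j)
        = -((-1)^j * (((n-1-j:ℕ):A) * (X^(T j) * (gb (2*n) (n-1-j) * U1 n)))) := by
      rw [hterm, e_low hj]
      have hs : ((-1):A)^(n+(n-1-j)) = -(-1)^j := by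
        rw [show n+(n-1-j) = 2*(n-1-j)+(j+1) by omega, pow_add, pow_mul]
        norm_num
        rw [pow_succ]
        ring
      rw [hs]; ring
    have hcast : ((n+j:ℕ):A) - ((n-1-j:ℕ):A) = ((2*j+1:ℕ):A) := by
      rw [show (n+j) = (n-1-j) + (2*j+1) by omega]
      push_cast; ring
    have c3 : cg (n-j)
        (((n+j:ℕ):A) * (gb (2*n) (n+j) * U1 n) - ((n-1-j:ℕ):A) * (gb (2*n) (n-1-j) * U1 n))
        (((2*j+1:ℕ):A)) := by
      have t1 := (cg.rfl (N := n-j) (x := ((n+j:ℕ):A))).mul c1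
      have t2 := (cg.rfl (N := n-j) (x := ((n-1-j:ℕ):A))).mul c2
      have t3 := t1.sub t2
      refine t3.trans (cg_of_eq ?_)
      rw [mul_one, mul_one, hcast]
    have c4 : cg (T j + (n-j))
        (X^(T j) * (((n+j:ℕ):A) * (gb (2*n) (n+j) * U1 n) - ((n-1-j:ℕ):A) * (gb (2*n) (n-1-j) * U1 n)))
        (X^(T j) * ((2*j+1:ℕ):A)) := cg_Xmul _ c3
    have c5 := c4.mono (show M+1 ≤ T j + (n-j) by omega)
    have heq : hterm n (n+j) + hterm n (n-1-j)
        = (-1)^j * (X^(T j) * (((n+j:ℕ):A) * (gb (2*n) (n+j) * U1 n)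
            - ((n-1-j:ℕ):A) * (gb (2*n) (n-1-j) * U1 n))) := by
      rw [hsign1, hsign2]; ring
    have htarget : PowerSeries.C (R := R7) (sc j) * X^(T j)
        = (-1)^j * (X^(T j) * ((2*j+1:ℕ):A)) := by
      rw [sc, map_mul, map_pow, map_neg, map_one, map_natCast]
      ring
    rw [heq, htarget]
    exact (cg.rfl (N := M+1) (x := ((-1):A)^j)).mul c5
  · -- trivial case : everything divisible by X^(M+1)
    have hd : ∀ z : A, (X:A)^(M+1) ∣ X^(T j) * z := fun z =>
      Dvd.dvd.mul_right (pow_dvd_pow _ (by omega)) z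
    apply cg.dvd2
    · have d1 : (X:A)^(M+1) ∣ hterm n (n+j) := by
        rw [hterm, e_high]
        exact Dvd.dvd.mul_left (hd (U1 n)) _
      have d2 : (X:A)^(M+1) ∣ hterm n (n-1-j) := by
        rw [hterm, e_low hj]
        exact Dvd.dvd.mul_left (hd (U1 n)) _
      exact dvd_add d1 d2
    · rw [mul_comm]
      exact hd _

lemma pair_main {M n : ℕ} (hn : M + 1 ≤ n) :
    cg (M+1) ((-1)^(n+1) * U1 n * Rs n) (Jpart n) := by
  rw [hexp, hsplit, Jpart, Finset.sum_range_succ]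
  apply cg.add
  · exact cg.sum _ _ _ (fun j hj => pair_j (Finset.mem_range.mp hj) hn)
  · apply cg.dvd2 (tail_dvd hn)
    rw [mul_comm]
    exact Dvd.dvd.mul_right (pow_dvd_pow _ (by have := le_T n; omega)) _

theorem jacobi : (Fm 1)^3 = J := by
  apply PowerSeries.ext
  intro c
  have a1 : cg (c+1) (Fm 1) (U1 (c+1)) := by
    have h := (cgF (le_refl 1) (c+1)).mono (show c+1 ≤ c+2 by omega)
    rwa [P1_eq_U1] at h
  have a2 : cg (c+1) (Fm 1) (U1 c) := by
    have h := cgF (le_refl 1) c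
    rwa [P1_eq_U1] at h
  have h1 : cg (c+1) ((Fm 1)^3) (U1 (c+1) * U1 (c+1) * U1 c) := by
    have h := (a1.mul a1).mul a2
    rwa [show (Fm 1)^3 = Fm 1 * Fm 1 * Fm 1 by ring] 
  have h2 : U1 (c+1) * U1 (c+1) * U1 c = (-1)^((c+1)+1) * U1 (c+1) * Rs (c+1) := by
    obtain ⟨_, hR⟩ := ZR (c+1) (by omega)
    rw [hR, show c+1-1 = c by omega]
    have hsq : ((-1:A))^(c+1+1) * (-1)^(c+1+1) = 1 := by
      rw [← pow_add]
      exact Even.neg_one_pow ⟨c+2, by ring⟩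
    linear_combination (-(U1 (c+1) * U1 (c+1) * U1 c)) * hsq
  have h3 : cg (c+1) ((-1)^((c+1)+1) * U1 (c+1) * Rs (c+1)) (Jpart (c+1)) :=
    pair_main (by omega)
  have h4 : cg (c+1) (Jpart (c+1)) J := by
    apply cg_of_coeff
    intro c' hc'
    rw [coeff_Jpart (by omega), J, PowerSeries.coeff_mk]
  exact (((h1.trans (cg_of_eq h2)).trans h3).trans h4).coeff (by omega)


/-! ### Part 4 : the mod 7 endgame -/

instance fact7 : Fact (Nat.Prime 7) := ⟨by norm_num⟩

instance charPA : CharP A 7 := by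
  constructor
  intro x
  constructor
  · intro hx
    have h1 : ((x : ℕ) : R7) = 0 := by
      have h2 := congrArg (PowerSeries.constantCoeff (R := R7)) hx
      simpa using h2
    exact (CharP.cast_eq_zero_iff R7 7 x).mp h1
  · intro hd
    have h1 : ((x : ℕ) : R7) = 0 := (CharP.cast_eq_zero_iff R7 7 x).mpr hd
    rw [← map_natCast (PowerSeries.C (R := R7)) x, h1, map_zero]

lemma cg.pow {N : ℕ} {x y : A} (k : ℕ) (h : cg N x y) : cg N (x^k) (y^k) := by
  induction k with
  | zero => simpa using cg.rfl
  | succ k ih =>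
    rw [pow_succ, pow_succ]
    exact ih.mul h

lemma P17 (N : ℕ) : (P 1 N)^7 = P 7 N := by
  rw [P, P, ← Finset.prod_pow]
  refine Finset.prod_congr rfl fun i _ => ?_
  rw [one_mul]
  have h := sub_pow_char (1:A) (X^(i+1)) (p := 7)
  rw [h, one_pow, ← pow_mul, show (i+1)*7 = 7*(i+1) by ring]

lemma F17 : (Fm 1)^7 = Fm 7 := by
  apply PowerSeries.ext
  intro c
  have a1 : cg (c+1) ((Fm 1)^7) ((P 1 c)^7) := ((cgF (by omega) c).pow 7)
  rw [P17] at a1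
  exact (a1.trans (cgF (by omega) c).symm).coeff (by omega)

lemma supp7P (s : ℕ) : ∀ c, ¬ ((7:ℕ) ∣ c) → coeff (R := R7) c (P 7 s) = 0 := by
  induction s with
  | zero =>
    intro c hc
    rw [P, Finset.prod_range_zero, PowerSeries.coeff_one, if_neg]
    rintro rfl
    exact hc ⟨0, rfl⟩
  | succ s ih =>
    intro c hc
    have hP : P 7 (s+1) = P 7 s * (1 - X^(7*(s+1))) := by
      rw [P, Finset.prod_range_succ, ← P]
    rw [hP, PowerSeries.coeff_mul]
    apply Finset.sum_eq_zero
    intro p hp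
    have hsum := Finset.HasAntidiagonal.mem_antidiagonal.mp hp
    by_cases h2 : (7:ℕ) ∣ p.2
    · have h1 : ¬ (7:ℕ) ∣ p.1 := by omega
      rw [ih p.1 h1, zero_mul]
    · have hb : coeff (R := R7) p.2 (1 - X^(7*(s+1))) = 0 := by
        rw [map_sub, PowerSeries.coeff_one, PowerSeries.coeff_X_pow,
          if_neg (by omega), if_neg (by omega)]
        ring
      rw [hb, mul_zero]

lemma supp7 {c : ℕ} (h : ¬ ((7:ℕ) ∣ c)) : coeff (R := R7) c (Fm 7) = 0 := by
  have h1 : coeff (R := R7) c (Fm 7) = coeff (R := R7) c (P 7 c) := (cgF (by omega) c).coeff (by omega)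
  rw [h1]
  exact supp7P c c h

lemma constFm7 : coeff (R := R7) 0 (Fm 7) = 1 := by
  have h1 : coeff (R := R7) 0 (Fm 7) = coeff (R := R7) 0 (P 7 0) := (cgF (by omega) 0).coeff (by omega)
  rw [h1, P, Finset.prod_range_zero, PowerSeries.coeff_one, if_pos rfl]

/-! ### the expand-by-2 relation -/

def Qp (s : ℕ) : Polynomial R7 := ∏ i ∈ range s, (1 - Polynomial.X^(i+1))

lemma P_eq_expand (m s : ℕ) :
    P m s = (Polynomial.coeToPowerSeries.ringHom (Polynomial.expand R7 m (Qp s)) : A) := by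
  rw [Qp, map_prod, map_prod, P]
  refine Finset.prod_congr rfl fun i _ => ?_
  rw [map_sub, map_one, map_pow, Polynomial.expand_X, map_sub, map_one, map_pow, map_pow]
  congr 1
  rw [← pow_mul, Polynomial.coeToPowerSeries.ringHom_apply, Polynomial.coe_X,
    show m*(i+1) = (i+1)*m by ring]

lemma P1_eq_Q (s : ℕ) : P 1 s = (Polynomial.coeToPowerSeries.ringHom (Qp s) : A) := by
  rw [P_eq_expand 1 s, Polynomial.expand_one]

lemma key4core (s t : ℕ) : coeff (R := R7) (2*t) ((P 2 s)^6) = coeff (R := R7) t ((P 1 s)^6) := by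
  rw [P_eq_expand 2 s, P1_eq_Q s, ← map_pow, ← map_pow, ← map_pow,
    Polynomial.coeToPowerSeries.ringHom_apply, Polynomial.coeToPowerSeries.ringHom_apply,
    Polynomial.coeff_coe, Polynomial.coeff_coe, Polynomial.coeff_expand (by omega)]
  rw [if_pos ⟨t, by ring⟩, show 2*t/2 = t by omega]

lemma key4odd (s t : ℕ) : coeff (R := R7) (2*t+1) ((P 2 s)^6) = 0 := by
  rw [P_eq_expand 2 s, ← map_pow, ← map_pow,
    Polynomial.coeToPowerSeries.ringHom_apply, Polynomial.coeff_coe,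
    Polynomial.coeff_expand (by omega), if_neg (by omega)]

/-! ### the two key coefficient lemmas -/

lemma zmod7_sq (x y : R7) (h : x^2+y^2 = 0) : x = 0 ∧ y = 0 := by
  revert h
  revert x y
  decide

lemma key5 {t : ℕ} (ht : t % 7 = 5) : coeff (R := R7) t ((Fm 1)^6) = 0 := by
  have h6 : (Fm 1)^6 = J * J := by rw [show (Fm 1)^6 = ((Fm 1)^3)^2 by ring, jacobi]; ring
  rw [h6, PowerSeries.coeff_mul]
  apply Finset.sum_eq_zero
  intro p hp
  have hsum := Finset.HasAntidiagonal.mem_antidiagonal.mp hp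
  rw [J, PowerSeries.coeff_mk, PowerSeries.coeff_mk, jc, jc, Finset.sum_mul_sum]
  apply Finset.sum_eq_zero
  intro j hj
  apply Finset.sum_eq_zero
  intro k hk
  by_cases h1 : T j = p.1
  swap
  · rw [if_neg h1, zero_mul]
  by_cases h2 : T k = p.2
  swap
  · rw [if_neg h2, mul_zero]
  rw [if_pos h1, if_pos h2, sc, sc]
  have hTt : T j + T k = t := by omega
  have hq : ((2*j+1:ℕ):R7)^2 + ((2*k+1:ℕ):R7)^2 = 0 := by
    have e1 := eight_T j
    have e2 := eight_T k
    have hcast : (((2*j+1)^2 + (2*k+1)^2 : ℕ) : R7) = ((8*t+2 : ℕ) : R7) := by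
      congr 1
      omega
    have hz : ((8*t+2 : ℕ) : R7) = 0 := by
      rw [ZMod.natCast_eq_zero_iff]
      omega
    push_cast at hcast hz ⊢
    rw [hcast]
    exact hz
  have hx := (zmod7_sq _ _ hq).1
  rw [hx]
  ring



lemma key4 {c : ℕ} (hc : c % 7 = 3) : coeff (R := R7) c ((Fm 2)^6) = 0 := by
  have h0 : coeff (R := R7) c ((Fm 2)^6) = coeff (R := R7) c ((P 2 c)^6) :=
    ((cgF (by omega) c).pow 6).coeff (by omega)
  rcases Nat.even_or_odd c with he | ho
  · obtain ⟨t, ht⟩ : ∃ t, c = 2*t := by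
      obtain ⟨t, ht⟩ := he; exact ⟨t, by omega⟩
    subst ht
    rw [h0, key4core]
    have hcg2 : coeff (R := R7) t ((Fm 1)^6) = coeff (R := R7) t ((P 1 (2*t))^6) :=
      ((cgF (by omega) (2*t)).pow 6).coeff (by omega)
    rw [← hcg2]
    exact key5 (by omega)
  · obtain ⟨t, ht⟩ := ho
    subst ht
    rw [h0, key4odd]

theorem main_mod7 (a : ℕ → ℤ)
    (ha : PowerSeries.mk a * (fser 1)^7 = (fser 2)^6) (n : ℕ) :
    a (7*n+3) % 7 = 0 := by
  have hmk : PowerSeries.map ρ (PowerSeries.mk a) = PowerSeries.mk (fun i => ρ (a i)) := by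
    apply PowerSeries.ext
    intro i
    rw [PowerSeries.coeff_map, PowerSeries.coeff_mk, PowerSeries.coeff_mk]
  have hmap : PowerSeries.mk (fun i => ρ (a i)) * (Fm 7) = (Fm 2)^6 := by
    have h1 := congrArg (PowerSeries.map ρ) ha
    rw [map_mul, map_pow, map_pow, hmk] at h1
    rw [← F17, Fm, Fm]
    exact h1
  have key : ∀ n, ρ (a (7*n+3)) = 0 := by
    intro n
    induction n using Nat.strong_induction_on with
    | _ n ih =>
      have hco := congrArg (coeff (R := R7) (7*n+3)) hmap
      rw [PowerSeries.coeff_mul, key4 (by omega)] at hco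
      rw [Finset.sum_eq_single ((7*n+3 : ℕ), (0:ℕ))] at hco
      · rw [constFm7, mul_one, PowerSeries.coeff_mk] at hco
        exact hco
      · intro p hp hne
        have hsum := Finset.HasAntidiagonal.mem_antidiagonal.mp hp
        by_cases h7 : (7:ℕ) ∣ p.2
        · obtain ⟨u, hu⟩ := h7
          have hu0 : u ≠ 0 := by
            rintro rfl
            exact hne (Prod.ext (by omega) (by omega))
          have hm1 : p.1 = 7*(n-u)+3 := by omega
          have hm2 : n - u < n := by omega
          rw [PowerSeries.coeff_mk, hm1, ih _ hm2, zero_mul]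
        · rw [supp7 h7, mul_zero]
      · intro hnot
        exact absurd (Finset.HasAntidiagonal.mem_antidiagonal.mpr (by omega)) hnot
  have h0 := key n
  have h7 : (7:ℤ) ∣ a (7*n+3) := by
    have h1 := (ZMod.intCast_zmod_eq_zero_iff_dvd (a (7*n+3)) 7).mp h0
    exact_mod_cast h1
  exact Int.emod_eq_zero_of_dvd h7


end

end A7


theorem a7_7n3_mod7 (a : Nat -> Int)
    (ha : PowerSeries.mk a * (f 1) ^ (7) = (f 2) ^ (6)) (n : Nat) :
    a (7 * n + 3) % 7 = 0 := by
  have ha' : PowerSeries.mk a * (A7.fser 1) ^ 7 = (A7.fser 2) ^ 6 := by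
    rw [show A7.fser = f from rfl]
    exact ha
  exact A7.main_mod7 a ha' n
end
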